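/- arXiv:2512.13437 — 7 statements merged into one kernel-verified Lean document; each statement's English description precedes it below -/
import Mathlib

section
/- Let n ≥ k ≥ 1, let A ∈ M_{n,n}(F) and B ∈ M_{k,k}(F), and let T : M_{n,k}(F) → M_{n,k}(F) be the linear map T(X) = A·X·B. Then det_{n,k}(T(X)) = det_{n,k}(X) for all X ∈ M_{n,k}(F) if and only if det_{n,k}(A(|d]) · det(B) = sgn(d) for every k-element subset d of {1,…,n}. -/
/- The Cullis determinant of an `n × k` matrix: the alternating sum of its maximal
(`k × k`) minors, indexed by strictly increasing selections of `k` rows. -/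
open Classical in
noncomputable def cullisDet {F : Type*} [Field F] {n k : ℕ} (X : Matrix (Fin n) (Fin k) F) : F :=
  ∑ f ∈ Finset.univ.filter (fun f : Fin k → Fin n => StrictMono f),
    (-1 : F) ^ (∑ α : Fin k, ((f α : ℕ) + (α : ℕ))) * (X.submatrix f id).det

/-!
Every row-minor of `A * X * B` is a product of a minor of `A * X` with `det B`, and the
Cauchy–Binet formula expands the minors of `A * X`; hence
`cullisDet (A * X * B) = ∑_d cullisDet (A(|d]) * det B * det (X[d])`, while
`cullisDet X = ∑_d sgn d * det (X[d])`. This gives sufficiency. For necessity, evaluate at the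
matrix whose columns are the standard basis vectors indexed by `d`: its only nonzero maximal
minor is the one on the rows `d`, so its Cullis determinant is `sgn d`, and `A` times it is
`A(|d]`.
-/

open Finset Matrix

theorem StrictMono.eq_of_range_subset {α : Type*} [LinearOrder α] {k : ℕ} {g g₀ : Fin k → α}
    (hg : StrictMono g) (hg₀ : StrictMono g₀) (h : Set.range g ⊆ Set.range g₀) : g = g₀ := by
  have hs : (univ.image g₀).card = k := by simp [card_image_of_injective _ hg₀.injective]
  exact (orderEmbOfFin_unique hs (fun i => by simpa [eq_comm] using h ⟨i, rfl⟩) hg).trans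
    (orderEmbOfFin_unique hs (by simp) hg₀).symm

section CauchyBinet

variable {m : Type*} [Fintype m] [LinearOrder m] {k : ℕ}

open Classical in
theorem sum_injective_eq_sum_strictMono_sum_perm {M : Type*} [AddCommMonoid M]
    (φ : (Fin k → m) → M) :
    ∑ p ∈ univ.filter (fun p : Fin k → m => Function.Injective p), φ p
      = ∑ g ∈ univ.filter (fun g : Fin k → m => StrictMono g),
          ∑ σ : Equiv.Perm (Fin k), φ (g ∘ σ) := by
  rw [← sum_product']
  refine (sum_bij' (fun q _ => q.1 ∘ q.2) (fun p _ => (p ∘ Tuple.sort p, (Tuple.sort p)⁻¹))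
    ?_ ?_ ?_ ?_ fun _ _ => rfl).symm
  · rintro ⟨g, σ⟩ hq
    simp only [mem_product, mem_filter, mem_univ, true_and, and_true] at hq ⊢
    exact hq.injective.comp σ.injective
  · intro p hp
    simp only [mem_product, mem_filter, mem_univ, true_and, and_true] at hp ⊢
    exact (Tuple.monotone_sort p).strictMono_of_injective (hp.comp (Tuple.sort p).injective)
  · rintro ⟨g, σ⟩ hq
    simp only [mem_product, mem_filter, mem_univ, true_and, and_true] at hq
    have hsorted : (g ∘ σ) ∘ Tuple.sort (g ∘ σ) = g := by
      rw [Tuple.comp_perm_comp_sort_eq_comp_sort,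
        Tuple.sort_eq_refl_iff_monotone.mpr hq.monotone]
      rfl
    have hinv : σ * Tuple.sort (g ∘ σ) = 1 :=
      Equiv.ext fun i => hq.injective (congrFun hsorted i)
    simp [hsorted, ← eq_inv_of_mul_eq_one_left hinv]
  · intro p _
    funext i
    simp

open Classical in
theorem Matrix.det_mul_eq_sum_strictMono {R : Type*} [CommRing R]
    (M : Matrix (Fin k) m R) (N : Matrix m (Fin k) R) :
    (M * N).det = ∑ g ∈ univ.filter (fun g : Fin k → m => StrictMono g),
      (M.submatrix id g).det * (N.submatrix g id).det := by
  have expand : (M * N).det = ∑ p : Fin k → m, (∏ i, N (p i) i) * (M.submatrix id p).det := by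
    calc (M * N).det
        = ∑ p : Fin k → m, ∑ σ : Equiv.Perm (Fin k),
            (Equiv.Perm.sign σ : R) * ∏ i, M (σ i) (p i) * N (p i) i := by
          simp only [det_apply', mul_apply, prod_univ_sum, mul_sum, Fintype.piFinset_univ]
          rw [sum_comm]
      _ = _ := by
          simp only [det_apply', mul_sum, submatrix_apply, id_eq, prod_mul_distrib]
          exact sum_congr rfl fun p _ => sum_congr rfl fun σ _ => by ring
  have vanish : ∀ p : Fin k → m, ¬ Function.Injective p → (M.submatrix id p).det = 0 := by
    intro p hp
    obtain ⟨i, j, hpij, hij⟩ := Function.not_injective_iff.mp hp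
    exact det_zero_of_column_eq hij fun _ => by simp [hpij]
  have permute : ∀ (g : Fin k → m) (σ : Equiv.Perm (Fin k)),
      (M.submatrix id (g ∘ σ)).det = Equiv.Perm.sign σ * (M.submatrix id g).det := fun g σ =>
    det_permute' σ (M.submatrix id g)
  rw [expand, ← sum_filter_of_ne fun p _ h =>
      by_contra fun hp => h (by rw [vanish p hp, mul_zero]),
    sum_injective_eq_sum_strictMono_sum_perm]
  refine sum_congr rfl fun g _ => ?_
  simp only [permute, det_apply' (N.submatrix g id), mul_sum, submatrix_apply, id_eq,
    Function.comp_apply]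
  exact sum_congr rfl fun σ _ => by ring

end CauchyBinet

section Cullis

variable {F : Type*} [Field F] {n k : ℕ}

theorem cullisDet_mul_det (M : Matrix (Fin n) (Fin k) F) (B : Matrix (Fin k) (Fin k) F) :
    cullisDet (M * B) = cullisDet M * B.det := by
  simp only [cullisDet, sum_mul]
  refine sum_congr rfl fun f _ => ?_
  rw [submatrix_mul M B f id id Function.bijective_id, submatrix_id_id, det_mul, mul_assoc]

open Classical in
theorem cullisDet_mul_eq_sum {m : ℕ} (A : Matrix (Fin n) (Fin m) F)
    (X : Matrix (Fin m) (Fin k) F) :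
    cullisDet (A * X) = ∑ g ∈ univ.filter (fun g : Fin k → Fin m => StrictMono g),
      cullisDet (A.submatrix id g) * (X.submatrix g id).det := by
  simp only [cullisDet, submatrix_mul A X _ id id Function.bijective_id, submatrix_id_id,
    det_mul_eq_sum_strictMono, mul_sum, sum_mul, submatrix_submatrix, Function.comp_id,
    Function.id_comp]
  rw [sum_comm]
  exact sum_congr rfl fun _ _ => sum_congr rfl fun _ _ => by ring

theorem det_one_submatrix_of_strictMono {α : Type*} [LinearOrder α] {R : Type*} [CommRing R]
    {g g₀ : Fin k → α} (hg : StrictMono g) (hg₀ : StrictMono g₀) :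
    ((1 : Matrix α α R).submatrix g g₀).det = if g = g₀ then 1 else 0 := by
  split_ifs with h
  · rw [h, submatrix_one g₀ hg₀.injective, det_one]
  · obtain ⟨_, ⟨i, rfl⟩, hi⟩ := Set.not_subset.mp (mt (hg.eq_of_range_subset hg₀) h)
    exact det_eq_zero_of_row_eq_zero i fun j =>
      one_apply_ne fun hij => hi ⟨j, hij.symm⟩

theorem cullisDet_one_submatrix {g₀ : Fin k → Fin n} (hg₀ : StrictMono g₀) :
    cullisDet ((1 : Matrix (Fin n) (Fin n) F).submatrix id g₀)
      = (-1 : F) ^ (∑ α : Fin k, ((g₀ α : ℕ) + (α : ℕ))) := by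
  rw [cullisDet, sum_eq_single_of_mem g₀ (by simpa using hg₀) fun g hg hne => by
    rw [submatrix_submatrix, Function.comp_id, Function.id_comp,
      det_one_submatrix_of_strictMono (mem_filter.mp hg).2 hg₀, if_neg hne, mul_zero]]
  simp [submatrix_one g₀ hg₀.injective]

end Cullis

theorem cullis_two_sided_mul_preserves_iff_general {F : Type*} [Field F] (n k : ℕ)
    (A : Matrix (Fin n) (Fin n) F) (B : Matrix (Fin k) (Fin k) F) :
    (∀ X : Matrix (Fin n) (Fin k) F, cullisDet (A * X * B) = cullisDet X) ↔
      (∀ g : Fin k → Fin n, StrictMono g →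
          cullisDet (A.submatrix id g) * B.det
            = (-1 : F) ^ (∑ α : Fin k, ((g α : ℕ) + (α : ℕ)))) := by
  constructor
  · intro h g hg
    have hAg : A * (1 : Matrix (Fin n) (Fin n) F).submatrix id g = A.submatrix id g := by
      simpa using (submatrix_mul A 1 id id g Function.bijective_id).symm
    rw [← hAg, ← cullisDet_mul_det, h, cullisDet_one_submatrix hg]
  · intro h X
    rw [cullisDet_mul_det, cullisDet_mul_eq_sum, cullisDet, sum_mul]
    exact sum_congr rfl fun g hg => by rw [mul_right_comm, h g (mem_filter.mp hg).2]

/-- the map `X ↦ A * X * B` preserves the Cullis determinant iff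
`cullisDet (A(|d]) * det B = sgn d` for every `k`-element subset `d` of `{1,…,n}`
(encoded by strictly monotone maps `g : Fin k → Fin n`). -/
theorem cullis_two_sided_mul_preserves_iff {F : Type*} [Field F] (n k : ℕ)
    (hk : 1 ≤ k) (hn : k ≤ n)
    (A : Matrix (Fin n) (Fin n) F) (B : Matrix (Fin k) (Fin k) F) :
    (∀ X : Matrix (Fin n) (Fin k) F, cullisDet (A * X * B) = cullisDet X) ↔
      (∀ g : Fin k → Fin n, StrictMono g →
          cullisDet (A.submatrix id g) * B.det
            = (-1 : F) ^ (∑ α : Fin k, ((g α : ℕ) + (α : ℕ)))) :=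
  cullis_two_sided_mul_preserves_iff_general n k A B
end

section
/- Assume 2 ≤ k, n ≥ k + 2, and n + k is even. Let x₁,…,x_n ∈ F and let X ∈ M_{n,k}(F) be the matrix whose first column is (x₁,…,x_n)ᵗ, whose j-th column for 2 ≤ j ≤ k−1 is the j-th standard basis column vector e_j, and whose k-th column has entry 0 in row 1 and entry 1 in rows 2,…,n. Then det_{n,k}(X) = x₁. -/
open Finset

namespace Fin

variable {k n : ℕ}

lemma lt_card_filter_iff_of_antitone {P : Fin k → Prop} [DecidablePred P] (hP : Antitone P)
    (a : Fin k) : (a : ℕ) < #{b | P b} ↔ P a := by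
  constructor
  · intro h
    by_contra ha
    have hsub : ({b | P b} : Finset (Fin k)) ⊆ Iio a := fun b hb => by
      by_contra hba
      exact ha (hP (not_lt.mp (by simpa using hba)) (mem_filter.mp hb).2)
    have := card_le_card hsub
    rw [card_Iio] at this
    omega
  · intro ha
    have hsub : Iic a ⊆ ({b | P b} : Finset (Fin k)) := fun b hb =>
      mem_filter.mpr ⟨mem_univ b, hP (mem_Iic.mp hb) ha⟩
    have := card_le_card hsub
    rw [card_Iic] at this
    omega

lemma eq_of_forall_castSucc_lt_iff {p q : Fin (k + 1)}
    (h : ∀ α : Fin k, α.castSucc < p ↔ α.castSucc < q) : p = q := by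
  ext
  by_contra hne
  rcases Nat.lt_or_gt_of_ne hne with hlt | hlt
  · have := h ⟨p, by omega⟩
    simp only [lt_def, val_castSucc] at this
    omega
  · have := h ⟨q, by omega⟩
    simp only [lt_def, val_castSucc] at this
    omega

lemma val_succAbove (p : Fin (n + 1)) (i : Fin n) :
    (p.succAbove i : ℕ) = i + if i.castSucc < p then 0 else 1 := by
  unfold succAbove
  split_ifs <;> simp

/- For a strictly increasing `g`, `orderedInsert i g` is the strictly increasing enumeration of
`{i} ∪ range (i.succAbove ∘ g)`, and `insertionIndex i g` is the position of `i` in it. -/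
def insertionIndex (i : Fin (n + 1)) (g : Fin k → Fin n) : Fin (k + 1) :=
  ⟨#{α | (g α).castSucc < i}, Nat.lt_succ_of_le ((card_filter_le _ _).trans (card_fin k).le)⟩

def orderedInsert (i : Fin (n + 1)) (g : Fin k → Fin n) : Fin (k + 1) → Fin (n + 1) :=
  insertNth (insertionIndex i g) i (i.succAbove ∘ g)

variable {i : Fin (n + 1)} {g : Fin k → Fin n}

lemma castSucc_lt_iff_castSucc_lt_insertionIndex (hg : Monotone g) (α : Fin k) :
    (g α).castSucc < i ↔ α.castSucc < insertionIndex i g :=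
  (lt_card_filter_iff_of_antitone
    (fun _ _ hab h => (castSucc_le_castSucc_iff.mpr (hg hab)).trans_lt h) α).symm

@[simp]
lemma orderedInsert_insertionIndex : orderedInsert i g (insertionIndex i g) = i :=
  insertNth_apply_same _ _ _

@[simp]
lemma orderedInsert_succAbove_insertionIndex (α : Fin k) :
    orderedInsert i g ((insertionIndex i g).succAbove α) = i.succAbove (g α) :=
  insertNth_apply_succAbove _ _ _ _

lemma strictMono_orderedInsert (hg : StrictMono g) : StrictMono (orderedInsert i g) := by
  have key := castSucc_lt_iff_castSucc_lt_insertionIndex (i := i) hg.monotone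
  intro a b hab
  rcases eq_self_or_eq_succAbove (insertionIndex i g) a with rfl | ⟨α, rfl⟩ <;>
    rcases eq_self_or_eq_succAbove (insertionIndex i g) b with rfl | ⟨β, rfl⟩
  · exact absurd hab (lt_irrefl _)
  · rw [orderedInsert_insertionIndex, orderedInsert_succAbove_insertionIndex,
      lt_succAbove_iff_le_castSucc, ← not_lt, key]
    exact not_lt.mpr ((lt_succAbove_iff_le_castSucc _ _).mp hab)
  · rw [orderedInsert_insertionIndex, orderedInsert_succAbove_insertionIndex,
      succAbove_lt_iff_castSucc_lt, key]
    exact (succAbove_lt_iff_castSucc_lt _ _).mp hab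
  · simpa using hg (succAbove_lt_succAbove_iff.mp hab)

lemma neg_one_pow_sum_orderedInsert {R : Type*} [Monoid R] [HasDistribNeg R]
    (hg : Monotone g) :
    (-1 : R) ^ ∑ a, ((orderedInsert i g a : ℕ) + a)
      = (-1) ^ ((i : ℕ) + insertionIndex i g) * (-1) ^ ∑ α, ((g α : ℕ) + α) := by
  have hsum : ∑ a, ((orderedInsert i g a : ℕ) + a)
      = i + insertionIndex i g + ∑ α, ((g α : ℕ) + α)
          + 2 * #{α | ¬ (g α).castSucc < i} := by
    rw [sum_univ_succAbove _ (insertionIndex i g), card_filter, mul_sum, add_assoc _ (∑ _, _),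
      ← sum_add_distrib]
    simp only [orderedInsert_insertionIndex, orderedInsert_succAbove_insertionIndex, val_succAbove,
      ← castSucc_lt_iff_castSucc_lt_insertionIndex hg]
    congr 1
    refine sum_congr rfl fun α _ => ?_
    split_ifs <;> omega
  rw [hsum, pow_add, pow_mul, neg_one_sq, one_pow, mul_one, pow_add]

open Classical in
lemma sum_strictMono_sum_eq_sum_sum_orderedInsert {M : Type*} [AddCommMonoid M]
    (G : (Fin (k + 1) → Fin (n + 1)) → Fin (k + 1) → M) :
    ∑ f ∈ univ.filter (fun f : Fin (k + 1) → Fin (n + 1) => StrictMono f), ∑ p, G f p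
      = ∑ i, ∑ g ∈ univ.filter (fun g : Fin k → Fin n => StrictMono g),
          G (orderedInsert i g) (insertionIndex i g) := by
  rw [← sum_product', ← sum_product']
  symm
  refine sum_nbij (fun x => (orderedInsert x.1 x.2, insertionIndex x.1 x.2)) ?_ ?_ ?_
    (fun _ _ => rfl)
  · rintro ⟨i, g⟩ h
    simp only [mem_product, mem_filter, mem_univ, true_and] at h ⊢
    exact ⟨strictMono_orderedInsert h, trivial⟩
  · rintro ⟨i, g⟩ - ⟨i', g'⟩ - h
    obtain ⟨hf, hp⟩ := Prod.mk.inj h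
    have hi : i = i' := by
      have := congrFun hf (insertionIndex i g)
      rwa [orderedInsert_insertionIndex, hp, orderedInsert_insertionIndex] at this
    subst hi
    refine Prod.ext rfl (funext fun α => succAbove_right_injective (p := i) ?_)
    have := congrFun hf ((insertionIndex i g).succAbove α)
    rwa [orderedInsert_succAbove_insertionIndex, hp, orderedInsert_succAbove_insertionIndex] at this
  · rintro ⟨f, p⟩ hf
    simp only [coe_product, Set.mem_prod, mem_coe, mem_filter, mem_univ, true_and] at hf
    obtain ⟨hf, -⟩ := hf
    choose g hg using fun α => exists_succAbove_eq (hf.injective.ne (succAbove_ne p α))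
    have hgm : StrictMono g := fun a b hab => by
      rw [← succAbove_lt_succAbove_iff (p := f p), hg, hg]
      exact hf (strictMono_succAbove p hab)
    have hidx : insertionIndex (f p) g = p := eq_of_forall_castSucc_lt_iff fun α => by
      rw [← castSucc_lt_iff_castSucc_lt_insertionIndex hgm.monotone,
        ← succAbove_lt_iff_castSucc_lt, hg, hf.lt_iff_lt, succAbove_lt_iff_castSucc_lt]
    refine ⟨(f p, g), by simp [hgm], Prod.ext ?_ hidx⟩
    conv_rhs => rw [← insertNth_self_removeNth p f]
    simp only [orderedInsert, hidx]
    congr 1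
    exact funext hg

end Fin

section CullisDet

variable {F : Type*} [Field F]

theorem cullisDet_succ_column {n k : ℕ} (X : Matrix (Fin (n + 1)) (Fin (k + 1)) F)
    (j : Fin (k + 1)) :
    cullisDet X = ∑ i : Fin (n + 1), (-1) ^ ((i : ℕ) + j) * X i j *
      cullisDet (X.submatrix i.succAbove j.succAbove) := by
  unfold cullisDet
  simp_rw [Matrix.det_succ_column _ j, mul_sum]
  rw [Fin.sum_strictMono_sum_eq_sum_sum_orderedInsert]
  refine sum_congr rfl fun i _ => sum_congr rfl fun g hg => ?_
  have hrows : Fin.orderedInsert i g ∘ (Fin.insertionIndex i g).succAbove = i.succAbove ∘ g :=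
    funext Fin.orderedInsert_succAbove_insertionIndex
  rw [Fin.neg_one_pow_sum_orderedInsert (mem_filter.mp hg).2.monotone, Matrix.submatrix_apply,
    Fin.orderedInsert_insertionIndex, Matrix.submatrix_submatrix, Matrix.submatrix_submatrix,
    Function.id_comp, Function.comp_id, hrows]
  have hp : ((-1 : F) ^ (Fin.insertionIndex i g : ℕ)) ^ 2 = 1 := by
    rw [← pow_mul, mul_comm, pow_mul, neg_one_sq, one_pow]
  simp only [id, pow_add]
  linear_combination (-1 : F) ^ (i : ℕ) * (-1) ^ (j : ℕ) * X i j *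
    ((-1) ^ ∑ α, ((g α : ℕ) + (α : ℕ))) *
    (X.submatrix (i.succAbove ∘ g) j.succAbove).det * hp

theorem cullisDet_of_col_eq_single {n k : ℕ} (X : Matrix (Fin (n + 1)) (Fin (k + 1)) F)
    {r : Fin (n + 1)} {j : Fin (k + 1)} (hX : ∀ i, X i j = if i = r then 1 else 0) :
    cullisDet X = (-1) ^ ((r : ℕ) + j) * cullisDet (X.submatrix r.succAbove j.succAbove) := by
  rw [cullisDet_succ_column X j, Fintype.sum_eq_single r fun i hi => by simp [hX, hi], hX,
    if_pos rfl, mul_one]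

theorem cullisDet_fin_zero {n : ℕ} (X : Matrix (Fin n) (Fin 0) F) : cullisDet X = 1 := by
  simp [cullisDet, Subsingleton.strictMono]

theorem cullisDet_fin_one {n : ℕ} (X : Matrix (Fin n) (Fin 1) F) :
    cullisDet X = ∑ i : Fin n, (-1) ^ (i : ℕ) * X i 0 := by
  cases n with
  | zero => simp [cullisDet]
  | succ n => simp [cullisDet_succ_column X 0, cullisDet_fin_zero]

end CullisDet

section FirstEntryMatrix

variable {F : Type*} [Field F]

def firstEntryMatrix (m N : ℕ) (y : Fin N → F) : Matrix (Fin N) (Fin (m + 2)) F := fun i j =>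
  if (j : ℕ) = 0 then y i
  else if (j : ℕ) = m + 1 then (if (i : ℕ) = 0 then 0 else 1)
  else if (i : ℕ) = (j : ℕ) then 1 else 0

lemma firstEntryMatrix_submatrix_succAbove_one (m N : ℕ) (y : Fin (N + 2) → F) :
    (firstEntryMatrix (m + 1) (N + 2) y).submatrix (Fin.succAbove 1) (Fin.succAbove 1)
      = firstEntryMatrix m (N + 1) (y ∘ Fin.succAbove 1) := by
  ext i j
  cases i using Fin.cases <;> cases j using Fin.cases <;>
    simp [firstEntryMatrix, Fin.one_succAbove_succ]

lemma cullisDet_firstEntryMatrix_succ (m N : ℕ) (y : Fin (N + 2) → F) :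
    cullisDet (firstEntryMatrix (m + 1) (N + 2) y)
      = cullisDet (firstEntryMatrix m (N + 1) (y ∘ Fin.succAbove 1)) := by
  rw [cullisDet_of_col_eq_single (r := 1) (j := 1), firstEntryMatrix_submatrix_succAbove_one]
  · norm_num
  · intro i
    simp only [firstEntryMatrix]
    rw [if_neg (by simp), if_neg (by simp)]
    simp [Fin.ext_iff]

lemma cullisDet_firstEntryMatrix_zero {N : ℕ} (hN : Even N) (y : Fin (N + 2) → F) :
    cullisDet (firstEntryMatrix 0 (N + 2) y) = y 0 := by
  rw [cullisDet_succ_column _ 0, Fin.sum_univ_succ]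
  have hfirst : ∑ a : Fin (N + 1), (-1 : F) ^ (a : ℕ) = 1 := by
    simp [Fin.sum_neg_one_pow, Nat.even_add_one, hN]
  have hrest (i : Fin (N + 1)) :
      ∑ a : Fin (N + 1), (if i.succ.succAbove a = 0 then 0 else (-1 : F) ^ (a : ℕ)) = 0 := by
    simp [Fin.sum_univ_succ, pow_succ, Fin.sum_neg_one_pow, hN]
  simp [cullisDet_fin_one, firstEntryMatrix, hfirst, hrest]

theorem cullisDet_firstEntryMatrix {N : ℕ} (hN : Even N) (m : ℕ)
    (y : Fin (N + m + 2) → F) :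
    cullisDet (firstEntryMatrix m (N + m + 2) y) = y 0 := by
  induction m with
  | zero => exact cullisDet_firstEntryMatrix_zero hN y
  | succ m ih => exact (cullisDet_firstEntryMatrix_succ m (N + m + 1) y).trans (ih _)

end FirstEntryMatrix

/-- for `2 ≤ k`, `n ≥ k + 2`, `n + k` even, the Cullis determinant of the
matrix with first column `(x₁,…,x_n)ᵗ`, middle columns the standard basis vectors, and
last column `(0,1,…,1)ᵗ` equals `x₁`. -/
theorem cullis_first_entry {F : Type*} [Field F] (n k : ℕ)
    (hk : 2 ≤ k) (hn : k + 2 ≤ n) (hpar : Even (n + k)) (x : Fin n → F) :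
    cullisDet (fun (i : Fin n) (j : Fin k) =>
        if (j : ℕ) = 0 then x i
        else if (j : ℕ) = k - 1 then (if (i : ℕ) = 0 then 0 else 1)
        else if (i : ℕ) = (j : ℕ) then 1 else 0)
      = x ⟨0, by omega⟩ := by
  obtain ⟨m, rfl⟩ : ∃ m, k = m + 2 := ⟨k - 2, by omega⟩
  obtain ⟨N, rfl⟩ : ∃ N, n = N + m + 2 := ⟨n - m - 2, by omega⟩
  have hN : Even N := by
    rw [show N + m + 2 + (m + 2) = N + 2 * (m + 2) by ring, Nat.even_add] at hpar
    exact hpar.mpr (even_two_mul _)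
  exact cullisDet_firstEntryMatrix hN m x
end

section
/- Assume n ≥ k ≥ 2, |F| > k, and n + k is even. If Y = (y_{ij}) ∈ M_{n,k}(F) is such that det_{n,k}(A + λY) = det_{n,k}(A) for all A ∈ M_{n,k}(F) and all λ ∈ F, then y_{1,1} = 0. -/
/-!
Translating by `Y` does not change the Cullis determinant, and a matrix with a zero column has
Cullis determinant `0`; hence so does every matrix whose first column is the first column `y` of
`Y`. Fill the other columns with standard basis vectors: `e_j` (for `j ≤ n - k + 1`) in the second
column and the last `k - 2` basis vectors in the remaining ones. Expanding the Cullis determinant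
along such basis columns leaves, up to sign, the alternating sum of `y_0, …, y_(n-k+1)` with `y_j`
omitted. Comparing the relations for `j` and `j + 1` shows that these entries are all equal, and as
`n - k + 1` is odd, the relation for `j = 0` then says that their common value is `0`.
-/

open Finset

section Fin

variable {n : ℕ}

theorem Fin.val_succAbove_eq_add_ite (p : Fin (n + 1)) (i : Fin n) :
    (p.succAbove i : ℕ) = i + if p < p.succAbove i then 1 else 0 := by
  rcases lt_or_ge (Fin.castSucc i) p with h | h
  · rw [Fin.succAbove_of_castSucc_lt _ _ h, if_neg (lt_asymm h)]
    simp
  · rw [Fin.succAbove_of_le_castSucc _ _ h, if_pos (h.trans_lt Fin.castSucc_lt_succ)]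
    simp

theorem Fin.sum_val_succAbove {ι : Type*} [Fintype ι] (p : Fin (n + 1)) (g : ι → Fin n) :
    ∑ α, (p.succAbove (g α) : ℕ) = ∑ α, (g α : ℕ) + #{α | p < p.succAbove (g α)} := by
  simp_rw [Fin.val_succAbove_eq_add_ite, sum_add_distrib, sum_boole, Nat.cast_id]

theorem Fin.range_comp_succAbove {α : Type*} {f : Fin (n + 1) → α} (hf : f.Injective)
    (p : Fin (n + 1)) : Set.range (f ∘ p.succAbove) = Set.range f \ {f p} := by
  rw [Set.range_comp, Fin.range_succAbove, Set.compl_eq_univ_sdiff, Set.image_sdiff hf,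
    Set.image_univ, Set.image_singleton]

theorem Fin.succAbove_castSucc_eq_succAbove_succ {i j : Fin n} (h : j ≠ i) :
    i.castSucc.succAbove j = i.succ.succAbove j := by
  rcases h.lt_or_gt with h | h
  · rw [Fin.succAbove_of_castSucc_lt _ _ (Fin.castSucc_lt_castSucc_iff.mpr h),
      Fin.succAbove_of_castSucc_lt _ _ (Fin.castSucc_lt_succ_iff.mpr h.le)]
  · rw [Fin.succAbove_of_le_castSucc _ _ (Fin.castSucc_le_castSucc_iff.mpr h.le),
      Fin.succAbove_of_le_castSucc _ _ (Fin.succ_le_castSucc_iff.mpr h)]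

end Fin

section StrictMonoTuples

variable {n k : ℕ}

theorem StrictMono.sum_val_add_val_succAbove {f : Fin (k + 1) → Fin n} (hf : StrictMono f)
    (p : Fin (k + 1)) :
    ∑ β, ((f β : ℕ) + β) = f p + p + ∑ α, ((f (p.succAbove α) : ℕ) + α)
      + #{α | f p < f (p.succAbove α)} := by
  have hcard : #{α | p < p.succAbove α} = #{α | f p < f (p.succAbove α)} :=
    congrArg card (filter_congr fun α _ => hf.lt_iff_lt.symm)
  have hsucc := Fin.sum_val_succAbove p id
  rw [Fin.sum_univ_succAbove _ p]
  simp only [id, sum_add_distrib] at hsucc ⊢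
  omega

open Classical in
theorem sum_strictMono_comp_succAbove {M : Type*} [AddCommMonoid M] (r : Fin (n + 1))
    (Φ : (Fin k → Fin (n + 1)) → M) :
    ∑ x ∈ univ.filter
        (fun x : (Fin (k + 1) → Fin (n + 1)) × Fin (k + 1) => StrictMono x.1 ∧ x.1 x.2 = r),
        Φ (x.1 ∘ x.2.succAbove)
      = ∑ h ∈ univ.filter (fun h : Fin k → Fin (n + 1) => StrictMono h ∧ ∀ α, h α ≠ r), Φ h := by
  refine sum_nbij (fun x => x.1 ∘ x.2.succAbove) ?_ ?_ ?_ fun _ _ => rfl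
  · rintro ⟨f, p⟩ hx
    simp only [mem_filter, mem_univ, true_and] at hx ⊢
    refine ⟨hx.1.comp (Fin.strictMono_succAbove p), fun α he => ?_⟩
    exact Fin.succAbove_ne p α (hx.1.injective (he.trans hx.2.symm))
  · rintro ⟨f, p⟩ hx ⟨f', p'⟩ hx' he
    simp only [coe_filter, mem_univ, true_and, Set.mem_ofPred_eq] at hx hx'
    have hrange := congrArg Set.range he
    simp only [Fin.range_comp_succAbove hx.1.injective, Fin.range_comp_succAbove hx'.1.injective,
      hx.2, hx'.2] at hrange
    have hr : r ∈ Set.range f := ⟨p, hx.2⟩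
    have hr' : r ∈ Set.range f' := ⟨p', hx'.2⟩
    obtain rfl : f = f' := by
      rw [← hx.1.range_inj hx'.1, ← Set.insert_eq_of_mem hr, ← Set.insert_eq_of_mem hr',
        ← Set.insert_sdiff_singleton, hrange, Set.insert_sdiff_singleton]
    rw [hx.1.injective (hx.2.trans hx'.2.symm)]
  · intro h hh
    simp only [coe_filter, mem_univ, true_and, Set.mem_ofPred_eq] at hh
    obtain ⟨hmono, hr⟩ := hh
    have hrh : r ∉ Set.range h := fun ⟨α, hα⟩ => hr α hα
    let S := insert r (univ.image h)
    have hS : S.card = k + 1 := by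
      rw [card_insert_of_notMem (by simpa using hrh), card_image_of_injective _ hmono.injective,
        card_univ, Fintype.card_fin]
    let f := S.orderEmbOfFin hS
    obtain ⟨p, hp⟩ : r ∈ Set.range f := by simp [f, S]
    refine ⟨(f, p), by simp [f.strictMono, hp], ?_⟩
    refine ((f.strictMono.comp (Fin.strictMono_succAbove p)).range_inj hmono).mp ?_
    rw [Fin.range_comp_succAbove f.injective, hp, range_orderEmbOfFin]
    simp [S, Set.insert_sdiff_self_of_notMem hrh]

open Classical in
theorem sum_succAbove_comp_strictMono {M : Type*} [AddCommMonoid M] (r : Fin (n + 1))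
    (Φ : (Fin k → Fin (n + 1)) → M) :
    ∑ g ∈ univ.filter (fun g : Fin k → Fin n => StrictMono g), Φ (r.succAbove ∘ g)
      = ∑ h ∈ univ.filter (fun h : Fin k → Fin (n + 1) => StrictMono h ∧ ∀ α, h α ≠ r), Φ h := by
  refine sum_nbij (fun g => r.succAbove ∘ g) ?_ ?_ ?_ fun _ _ => rfl
  · intro g hg
    simp only [mem_filter, mem_univ, true_and] at hg ⊢
    exact ⟨(Fin.strictMono_succAbove r).comp hg, fun α => Fin.succAbove_ne r (g α)⟩
  · intro g _ g' _ he
    funext α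
    exact Fin.succAbove_right_injective (congrFun he α)
  · intro h hh
    simp only [coe_filter, mem_univ, true_and, Set.mem_ofPred_eq] at hh
    choose g hg using fun α => Fin.exists_succAbove_eq (hh.2 α)
    refine ⟨g, ?_, funext hg⟩
    simp only [coe_filter, mem_univ, true_and, Set.mem_ofPred_eq]
    intro a b hab
    exact (Fin.strictMono_succAbove r).lt_iff_lt.mp (by simpa only [hg] using hh.1 hab)

end StrictMonoTuples

section

variable {F : Type*} [Field F]

theorem eq_zero_of_forall_sum_neg_one_pow_mul_succAbove {M : ℕ} (hM : Odd M)
    {v : Fin (M + 1) → F}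
    (hv : ∀ j : Fin (M + 1), ∑ i : Fin M, (-1) ^ (i : ℕ) * v (j.succAbove i) = 0) :
    v = 0 := by
  have hstep : ∀ i : Fin M, v i.castSucc = v i.succ := by
    intro i
    have hdiff := congrArg₂ (· - ·) (hv i.castSucc) (hv i.succ)
    simp only [sub_zero, ← sum_sub_distrib, ← mul_sub] at hdiff
    rw [sum_eq_single i (fun l _ hl => by rw [Fin.succAbove_castSucc_eq_succAbove_succ hl,
      sub_self, mul_zero]) (by simp), Fin.succAbove_castSucc_self, Fin.succAbove_succ_self] at hdiff
    exact (sub_eq_zero.mp ((mul_eq_zero.mp hdiff).resolve_left (pow_ne_zero _ (by norm_num)))).symm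
  have hconst : ∀ j, v j = v 0 := by
    intro j
    induction j using Fin.induction with
    | zero => rfl
    | succ i ih => rw [← hstep, ih]
  have h0 := hv 0
  simp only [hconst _, ← sum_mul, Fin.sum_univ_eq_sum_range (fun i => (-1 : F) ^ i),
    neg_one_geom_sum, if_neg (Nat.not_even_iff_odd.mpr hM), one_mul] at h0
  exact funext fun j => by rw [hconst, h0, Pi.zero_apply]

theorem cullisDet_eq_of_col_last_eq_single {n k : ℕ} (X : Matrix (Fin (n + 1)) (Fin (k + 1)) F)
    (r : Fin (n + 1)) (hX : ∀ i, X i (Fin.last k) = Pi.single (M := fun _ => F) r 1 i) :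
    cullisDet X = (-1) ^ ((r : ℕ) + k) * cullisDet (X.submatrix r.succAbove Fin.castSucc) := by
  classical
  -- the common value of the terms indexed by `(f, p)` with `f ∘ p.succAbove = h` and by `g`
  -- with `r.succAbove ∘ g = h`
  let φ : (Fin k → Fin (n + 1)) → F := fun h =>
    (-1) ^ ((r : ℕ) + k + ∑ α, ((h α : ℕ) + α) + #{α | r < h α}) *
      (X.submatrix h Fin.castSucc).det
  have lhs : cullisDet X = ∑ x ∈ univ.filter (fun x : (Fin (k + 1) → Fin (n + 1)) × Fin (k + 1) =>
      StrictMono x.1 ∧ x.1 x.2 = r), φ (x.1 ∘ x.2.succAbove) := by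
    rw [sum_filter, Fintype.sum_prod_type, cullisDet, sum_filter]
    refine sum_congr rfl fun f _ => ?_
    by_cases hf : StrictMono f
    · rw [if_pos hf, Matrix.det_succ_column _ (Fin.last k), mul_sum]
      refine sum_congr rfl fun p _ => ?_
      by_cases hp : f p = r
      · simp only [hf, hp, true_and, if_true, Matrix.submatrix_apply, id, hX, Pi.single_eq_same,
          mul_one, Matrix.submatrix_submatrix, Fin.succAbove_last, Fin.val_last,
          Function.id_comp, φ, Function.comp_apply]
        rw [hf.sum_val_add_val_succAbove p, hp, ← mul_assoc, ← pow_add,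
          show (r : ℕ) + p + ∑ α, ((f (p.succAbove α) : ℕ) + α) + #{α | r < f (p.succAbove α)}
              + (p + k) = r + k + ∑ α, ((f (p.succAbove α) : ℕ) + α)
              + #{α | r < f (p.succAbove α)} + 2 * p by omega,
          pow_add _ _ (2 * _), pow_mul, neg_one_sq, one_pow, mul_one]
      · simp [hp, hX]
    · simp [hf]
  have rhs : (-1) ^ ((r : ℕ) + k) * cullisDet (X.submatrix r.succAbove Fin.castSucc)
      = ∑ g ∈ univ.filter (fun g : Fin k → Fin n => StrictMono g), φ (r.succAbove ∘ g) := by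
    rw [cullisDet, mul_sum]
    refine sum_congr rfl fun g _ => ?_
    have hsucc := Fin.sum_val_succAbove r g
    simp only [φ, Matrix.submatrix_submatrix, Function.comp_apply, Function.comp_id]
    rw [← mul_assoc, ← pow_add]
    simp only [sum_add_distrib] at hsucc ⊢
    rw [show (r : ℕ) + k + (∑ α, (r.succAbove (g α) : ℕ) + ∑ α : Fin k, (α : ℕ))
          + #{α | r < r.succAbove (g α)}
        = r + k + (∑ α, (g α : ℕ) + ∑ α : Fin k, (α : ℕ)) + 2 * #{α | r < r.succAbove (g α)}
        by omega, pow_add _ _ (2 * _), pow_mul, neg_one_sq, one_pow, mul_one]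
  rw [lhs, rhs, sum_strictMono_comp_succAbove, sum_succAbove_comp_strictMono]

theorem cullisDet_updateCol_zero {n k : ℕ} (X : Matrix (Fin n) (Fin k) F) (j : Fin k) :
    cullisDet (X.updateCol j 0) = 0 :=
  sum_eq_zero fun f _ => by
    rw [Matrix.det_eq_zero_of_column_eq_zero j fun i => by simp, mul_zero]

theorem cullisDet_updateCol_eq_zero {n k : ℕ} {Y : Matrix (Fin n) (Fin k) F}
    (h : ∀ A : Matrix (Fin n) (Fin k) F, cullisDet (A + Y) = cullisDet A)
    (A : Matrix (Fin n) (Fin k) F) (j : Fin k) :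
    cullisDet (A.updateCol j fun i => Y i j) = 0 := by
  have hA : (A.updateCol j fun i => Y i j) = (A - Y).updateCol j 0 + Y := by
    ext a b
    by_cases hb : b = j <;> simp [hb]
  rw [hA, h, cullisDet_updateCol_zero]

theorem cullisDet_fin_two_of_col_one_eq_single {n : ℕ} (X : Matrix (Fin (n + 1)) (Fin 2) F)
    (j : Fin (n + 1)) (hX : ∀ i, X i 1 = Pi.single (M := fun _ => F) j 1 i) :
    cullisDet X = (-1) ^ ((j : ℕ) + 1) * ∑ i : Fin n, (-1) ^ (i : ℕ) * X (j.succAbove i) 0 := by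
  rw [cullisDet_eq_of_col_last_eq_single X j hX, cullisDet_fin_one]
  rfl

theorem cullisDet_eq_of_cols_natAdd_eq_single {N K : ℕ} :
    ∀ {q : ℕ} (X : Matrix (Fin (N + q)) (Fin (K + q)) F),
      (∀ (c : Fin q) (i : Fin (N + q)),
        X i (Fin.natAdd K c) = Pi.single (M := fun _ => F) (Fin.natAdd N c) 1 i) →
      cullisDet X = (-1) ^ (q * (N + K)) * cullisDet (X.submatrix (Fin.castAdd q) (Fin.castAdd q))
  | 0, X, _ => by simp
  | q + 1, X, hX => by
    have hlast : ∀ i, X i (Fin.last (K + q)) = Pi.single (M := fun _ => F) (Fin.last (N + q)) 1 i :=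
      fun i => by simpa using hX (Fin.last q) i
    have hinner : ∀ (c : Fin q) (i : Fin (N + q)),
        X.submatrix Fin.castSucc Fin.castSucc i (Fin.natAdd K c)
          = Pi.single (M := fun _ => F) (Fin.natAdd N c) 1 i := fun c i => by
      rw [Matrix.submatrix_apply, ← Fin.natAdd_castSucc, hX, Fin.natAdd_castSucc]
      simp only [Pi.single_apply, Fin.castSucc_inj]
    rw [cullisDet_eq_of_col_last_eq_single (n := N + q) (k := K + q) X _ hlast, Fin.succAbove_last,
      cullisDet_eq_of_cols_natAdd_eq_single _ hinner, Matrix.submatrix_submatrix, ← mul_assoc,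
      ← pow_add]
    congr 1
    rw [Fin.val_last, show N + q + (K + q) + q * (N + K) = (q + 1) * (N + K) + 2 * q by ring,
      pow_add _ _ (2 * _), pow_mul (-1 : F) 2 q, neg_one_sq, one_pow, mul_one]

end

/-- for `n ≥ k ≥ 2`, `|F| > k`, `n + k` even, if adding any multiple of `Y`
never changes the Cullis determinant, then the `(1,1)` entry of `Y` vanishes. -/
theorem cullis_radical_entry_zero {F : Type*} [Field F] (n k : ℕ)
    (hk : 2 ≤ k) (hn : k ≤ n)
    (hpar : Even (n + k)) (Y : Matrix (Fin n) (Fin k) F)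
    (h : ∀ (A : Matrix (Fin n) (Fin k) F) (lam : F),
      cullisDet (A + lam • Y) = cullisDet A) :
    Y ⟨0, by omega⟩ ⟨0, by omega⟩ = 0 := by
  obtain ⟨q, rfl⟩ := Nat.exists_eq_add_of_le hk
  obtain ⟨M, rfl⟩ : ∃ M, n = M + 1 + q := ⟨n - q - 1, by omega⟩
  have hM : Odd M := by
    rw [Nat.even_iff] at hpar
    exact Nat.odd_iff.mpr (by omega)
  have hY (A : Matrix (Fin (M + 1 + q)) (Fin (2 + q)) F) : cullisDet (A + Y) = cullisDet A := by
    simpa using h A 1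
  let A (j : Fin (M + 1)) : Matrix (Fin (M + 1 + q)) (Fin (2 + q)) F := Matrix.of fun i =>
    Fin.addCases ![0, Pi.single (M := fun _ => F) (Fin.castAdd q j) 1 i]
      fun c => Pi.single (M := fun _ => F) (Fin.natAdd (M + 1) c) 1 i
  have key (j : Fin (M + 1)) :
      ∑ i : Fin M, (-1) ^ (i : ℕ) * Y (Fin.castAdd q (j.succAbove i)) 0 = 0 := by
    have hj := cullisDet_updateCol_eq_zero hY (A j) 0
    have hcol0 : (Fin.castAdd q 0 : Fin (2 + q)) = 0 := rfl
    have hcol1 : (Fin.castAdd q 1 : Fin (2 + q)) ≠ 0 := by simp [Fin.ext_iff]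
    have hcol (c : Fin q) : Fin.natAdd 2 c ≠ 0 := by simp [Fin.ext_iff]
    rw [cullisDet_eq_of_cols_natAdd_eq_single _ fun c i => by simp [A, hcol c],
      cullisDet_fin_two_of_col_one_eq_single _ j fun i => by simp [A, hcol1, Pi.single_apply]] at hj
    simpa [hcol0] using hj
  exact congrFun (eq_zero_of_forall_sum_neg_one_pow_mul_succAbove
    (v := fun i => Y (Fin.castAdd q i) 0) hM key) 0
end

section
/- Assume n ≥ k ≥ 1 and n + k is even. For all 1 ≤ i ≤ n and 1 ≤ j ≤ k, the map S_{i,j} : M_{n,k}(F) → M_{n,k}(F) is an invertible linear map and det_{n,k}(S_{i,j}(X)) = det_{n,k}(X) for all X ∈ M_{n,k}(F). -/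
/-- The map `S_{i,j}` (with `i : Fin n`, `j : Fin k` the 0-indexed versions of the
row index `i+1` and column index `j+1`): `(−1)^{n−(i+1)}` times the matrix obtained
from `X` by cyclically shifting the rows so row `i` comes first, negating the rows that
wrap around to the bottom, interchanging column `0` and column `j`, and multiplying the
resulting first column by `−1` when `j ≠ 0`. -/
def Smap {F : Type*} [Field F] {n k : ℕ} (i : Fin n) (j : Fin k)
    (X : Matrix (Fin n) (Fin k) F) : Matrix (Fin n) (Fin k) F :=
  fun r c =>
    (-1 : F) ^ (n - 1 - (i : ℕ)) *
    (if ((i + r : Fin n) : ℕ) < (i : ℕ) then -1 else 1) *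
    (if (c : ℕ) = 0 ∧ (j : ℕ) ≠ 0 then -1 else 1) *
    X (i + r) (if (c : ℕ) = 0 then j else if c = j then ⟨0, j.pos⟩ else c)

namespace Cullis5

variable {F : Type*} [Field F] {n k : ℕ}

private lemma mod1 {a k : ℕ} (ha : a < k) :
    (a + 1) % k = if a + 1 = k then 0 else a + 1 := by
  split
  · next h => rw [h, Nat.mod_self]
  · next h => exact Nat.mod_eq_of_lt (by omega)

private lemma mod2 {a k : ℕ} (ha : a < k) :
    (a + (k - 1)) % k = if a = 0 then k - 1 else a - 1 := by
  split
  · next h => subst h; simp only [Nat.zero_add]; exact Nat.mod_eq_of_lt (by omega)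
  · next h =>
      have h2 : a + (k - 1) = (a - 1) + 1 * k := by omega
      rw [h2, Nat.add_mul_mod_self_right]
      exact Nat.mod_eq_of_lt (by omega)

private lemma mod3 {a n : ℕ} (ha : a < n) :
    (a + (n - 1)) % n = if a = 0 then n - 1 else a - 1 := mod2 ha

/-- shift rows up by one, negating the row that wraps to the bottom. -/
def T (X : Matrix (Fin n) (Fin k) F) : Matrix (Fin n) (Fin k) F :=
  fun r c => (if (r : ℕ) = n - 1 then (-1 : F) else 1) *
    X ⟨((r : ℕ) + 1) % n, Nat.mod_lt _ r.pos⟩ c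

/-- the forward reindexing on row selections. -/
def Phi (f : Fin k → Fin n) : Fin k → Fin n :=
  fun α =>
    if ((f ⟨k - 1, Nat.sub_lt α.pos Nat.one_pos⟩ : ℕ) = n - 1) then
      ⟨((f ⟨((α : ℕ) + (k - 1)) % k, Nat.mod_lt _ α.pos⟩ : ℕ) + 1) % n,
        Nat.mod_lt _ (f α).pos⟩
    else ⟨((f α : ℕ) + 1) % n, Nat.mod_lt _ (f α).pos⟩

/-- the backward reindexing on row selections. -/
def Psi (g : Fin k → Fin n) : Fin k → Fin n :=
  fun α =>
    if ((g ⟨0, α.pos⟩ : ℕ) = 0) then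
      ⟨((g ⟨((α : ℕ) + 1) % k, Nat.mod_lt _ α.pos⟩ : ℕ) + (n - 1)) % n,
        Nat.mod_lt _ (g α).pos⟩
    else ⟨((g α : ℕ) + (n - 1)) % n, Nat.mod_lt _ (g α).pos⟩

lemma sm_lt {f : Fin k → Fin n} (hf : StrictMono f) {a b : Fin k} (h : (a : ℕ) < b) :
    (f a : ℕ) < f b := hf (by rwa [Fin.lt_def])

lemma sm_le {f : Fin k → Fin n} (hf : StrictMono f) {a b : Fin k} (h : (a : ℕ) ≤ b) :
    (f a : ℕ) ≤ f b := hf.monotone (by rwa [Fin.le_def])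

lemma Phi_val (hk0 : 0 < k) {f : Fin k → Fin n} (hf : StrictMono f) (α : Fin k) :
    (Phi f α : ℕ) =
      if (f ⟨k - 1, Nat.sub_lt hk0 Nat.one_pos⟩ : ℕ) = n - 1 then
        (if (α : ℕ) = 0 then 0
         else (f ⟨(α : ℕ) - 1, Nat.lt_of_le_of_lt (Nat.sub_le _ _) α.isLt⟩ : ℕ) + 1)
      else (f α : ℕ) + 1 := by
  have hn0 : 0 < n := (f α).pos
  unfold Phi
  by_cases h : (f ⟨k - 1, Nat.sub_lt hk0 Nat.one_pos⟩ : ℕ) = n - 1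
  · rw [if_pos h, if_pos h]; simp only [Fin.val_mk]
    by_cases h0 : (α : ℕ) = 0
    · rw [if_pos h0]
      have hidx : (⟨((α : ℕ) + (k - 1)) % k, Nat.mod_lt _ α.pos⟩ : Fin k)
          = ⟨k - 1, Nat.sub_lt hk0 Nat.one_pos⟩ := by
        apply Fin.ext
        simp only [Fin.val_mk]; rw [mod2 α.isLt, if_pos h0]
      rw [hidx, h]
      have he : n - 1 + 1 = n := by omega
      rw [he, Nat.mod_self]
    · rw [if_neg h0]
      have hidx : (⟨((α : ℕ) + (k - 1)) % k, Nat.mod_lt _ α.pos⟩ : Fin k)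
          = ⟨(α : ℕ) - 1, Nat.lt_of_le_of_lt (Nat.sub_le _ _) α.isLt⟩ := by
        apply Fin.ext
        simp only [Fin.val_mk]; rw [mod2 α.isLt, if_neg h0]
      rw [hidx]
      have hlt : (f ⟨(α : ℕ) - 1, Nat.lt_of_le_of_lt (Nat.sub_le _ _) α.isLt⟩ : ℕ)
          < (f ⟨k - 1, Nat.sub_lt hk0 Nat.one_pos⟩ : ℕ) := by
        apply sm_lt hf
        simp only [Fin.val_mk]
        have := α.isLt
        omega
      rw [Nat.mod_eq_of_lt (by omega)]
  · rw [if_neg h, if_neg h]; simp only [Fin.val_mk]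
    have hle : (f α : ℕ) ≤ (f ⟨k - 1, Nat.sub_lt hk0 Nat.one_pos⟩ : ℕ) := by
      apply sm_le hf
      simp only [Fin.val_mk]
      have := α.isLt
      omega
    have h2 := (f ⟨k - 1, Nat.sub_lt hk0 Nat.one_pos⟩).isLt
    rw [Nat.mod_eq_of_lt (by omega)]

lemma Psi_val (hk0 : 0 < k) {g : Fin k → Fin n} (hg : StrictMono g) (α : Fin k) :
    (Psi g α : ℕ) =
      if (g ⟨0, hk0⟩ : ℕ) = 0 then
        (if (α : ℕ) = k - 1 then n - 1
         else (g ⟨((α : ℕ) + 1) % k, Nat.mod_lt _ α.pos⟩ : ℕ) - 1)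
      else (g α : ℕ) - 1 := by
  have hn0 : 0 < n := (g α).pos
  unfold Psi
  by_cases h : (g ⟨0, hk0⟩ : ℕ) = 0
  · rw [if_pos h, if_pos h]; simp only [Fin.val_mk]
    by_cases h1 : (α : ℕ) = k - 1
    · rw [if_pos h1]
      have hidx : (⟨((α : ℕ) + 1) % k, Nat.mod_lt _ α.pos⟩ : Fin k) = ⟨0, hk0⟩ := by
        apply Fin.ext
        simp only [Fin.val_mk]; rw [mod1 α.isLt, if_pos (by have := α.isLt; omega)]
      rw [hidx, h, Nat.zero_add]
      exact Nat.mod_eq_of_lt (by omega)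
    · rw [if_neg h1]
      have hidx2 : ((α : ℕ) + 1) % k = (α : ℕ) + 1 := by
        rw [mod1 α.isLt, if_neg (by have := α.isLt; omega)]
      have h2 : (g ⟨0, hk0⟩ : ℕ) < (g ⟨((α : ℕ) + 1) % k, Nat.mod_lt _ α.pos⟩ : ℕ) := by
        apply sm_lt hg
        simp only [Fin.val_mk]; rw [hidx2]
        omega
      have h3 := (g ⟨((α : ℕ) + 1) % k, Nat.mod_lt _ α.pos⟩).isLt
      rw [mod3 h3, if_neg (by omega)]
  · rw [if_neg h, if_neg h]; simp only [Fin.val_mk]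
    have h2 : (g ⟨0, hk0⟩ : ℕ) ≤ (g α : ℕ) := sm_le hg (by simp only [Fin.val_mk]; omega)
    rw [mod3 (g α).isLt, if_neg (by omega)]

lemma Phi_mono (hk0 : 0 < k) {f : Fin k → Fin n} (hf : StrictMono f) :
    StrictMono (Phi f) := by
  intro a b hab
  rw [Fin.lt_def] at hab ⊢
  rw [Phi_val hk0 hf a, Phi_val hk0 hf b]
  by_cases h : (f ⟨k - 1, Nat.sub_lt hk0 Nat.one_pos⟩ : ℕ) = n - 1
  · rw [if_pos h, if_pos h]
    by_cases ha : (a : ℕ) = 0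
    · rw [if_pos ha, if_neg (by omega)]
      omega
    · rw [if_neg ha, if_neg (by omega)]
      have := sm_lt hf (a := ⟨(a : ℕ) - 1, Nat.lt_of_le_of_lt (Nat.sub_le _ _) a.isLt⟩)
        (b := ⟨(b : ℕ) - 1, Nat.lt_of_le_of_lt (Nat.sub_le _ _) b.isLt⟩) (by simp only []; omega)
      omega
  · rw [if_neg h, if_neg h]
    have := sm_lt hf (a := a) (b := b) hab
    omega

lemma Psi_mono (hk0 : 0 < k) {g : Fin k → Fin n} (hg : StrictMono g) :
    StrictMono (Psi g) := by
  intro a b hab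
  rw [Fin.lt_def] at hab ⊢
  rw [Psi_val hk0 hg a, Psi_val hk0 hg b]
  have hak := a.isLt
  have hbk := b.isLt
  by_cases h : (g ⟨0, hk0⟩ : ℕ) = 0
  · rw [if_pos h, if_pos h]
    have ha' : ¬ (a : ℕ) = k - 1 := by omega
    rw [if_neg ha']
    have hidxa : ((a : ℕ) + 1) % k = (a : ℕ) + 1 := by
      rw [mod1 a.isLt, if_neg (by omega)]
    have h2 : (g ⟨0, hk0⟩ : ℕ) < (g ⟨((a : ℕ) + 1) % k, Nat.mod_lt _ a.pos⟩ : ℕ) := by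
      apply sm_lt hg; simp only [hidxa]; omega
    by_cases hb : (b : ℕ) = k - 1
    · rw [if_pos hb]
      have := (g ⟨((a : ℕ) + 1) % k, Nat.mod_lt _ a.pos⟩).isLt
      have h2k : 2 ≤ k := by omega
      omega
    · rw [if_neg hb]
      have hidxb : ((b : ℕ) + 1) % k = (b : ℕ) + 1 := by
        rw [mod1 b.isLt, if_neg (by omega)]
      have h3 : (g ⟨((a : ℕ) + 1) % k, Nat.mod_lt _ a.pos⟩ : ℕ)
          < (g ⟨((b : ℕ) + 1) % k, Nat.mod_lt _ b.pos⟩ : ℕ) := by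
        apply sm_lt hg; simp only [hidxa, hidxb]; omega
      omega
  · rw [if_neg h, if_neg h]
    have h0a : (g ⟨0, hk0⟩ : ℕ) ≤ (g a : ℕ) := sm_le hg (by simp only []; omega)
    have := sm_lt hg (a := a) (b := b) hab
    omega


lemma Psi_Phi (hk0 : 0 < k) {f : Fin k → Fin n} (hf : StrictMono f) :
    Psi (Phi f) = f := by
  funext α
  apply Fin.ext
  rw [Psi_val hk0 (Phi_mono hk0 hf) α]
  have hvals := fun β => Phi_val hk0 hf β
  by_cases h : (f ⟨k - 1, Nat.sub_lt hk0 Nat.one_pos⟩ : ℕ) = n - 1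
  · have h0 : (Phi f ⟨0, hk0⟩ : ℕ) = 0 := by
      rw [hvals ⟨0, hk0⟩, if_pos h, if_pos (by simp only [Fin.val_mk])]
    rw [if_pos h0]
    by_cases h1 : (α : ℕ) = k - 1
    · rw [if_pos h1]
      have : α = ⟨k - 1, Nat.sub_lt hk0 Nat.one_pos⟩ := Fin.ext h1
      rw [this, h]
    · rw [if_neg h1]
      have hidx2 : ((α : ℕ) + 1) % k = (α : ℕ) + 1 := by
        rw [mod1 α.isLt, if_neg (by have := α.isLt; omega)]
      rw [hvals ⟨((α : ℕ) + 1) % k, Nat.mod_lt _ α.pos⟩, if_pos h,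
        if_neg (by simp only [Fin.val_mk]; rw [hidx2]; omega)]
      have hidx3 : (⟨(↑(⟨((α : ℕ) + 1) % k, Nat.mod_lt _ α.pos⟩ : Fin k) : ℕ) - 1,
          Nat.lt_of_le_of_lt (Nat.sub_le _ _) (Fin.isLt _)⟩ : Fin k) = α := by
        apply Fin.ext
        simp only [Fin.val_mk]
        rw [hidx2]
        omega
      rw [hidx3]
      omega
  · have h0 : ¬ (Phi f ⟨0, hk0⟩ : ℕ) = 0 := by
      rw [hvals ⟨0, hk0⟩, if_neg h]
      omega
    rw [if_neg h0, hvals α, if_neg h]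
    omega

lemma Phi_Psi (hk0 : 0 < k) {g : Fin k → Fin n} (hg : StrictMono g) :
    Phi (Psi g) = g := by
  funext α
  apply Fin.ext
  rw [Phi_val hk0 (Psi_mono hk0 hg) α]
  have hvals := fun β => Psi_val hk0 hg β
  have hn0 : 0 < n := (g α).pos
  by_cases h : (g ⟨0, hk0⟩ : ℕ) = 0
  · have hlast : (Psi g ⟨k - 1, Nat.sub_lt hk0 Nat.one_pos⟩ : ℕ) = n - 1 := by
      rw [hvals _, if_pos h, if_pos (by simp only [Fin.val_mk])]
    rw [if_pos hlast]
    by_cases h0 : (α : ℕ) = 0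
    · rw [if_pos h0]
      have : α = ⟨0, hk0⟩ := Fin.ext h0
      rw [this, h]
    · rw [if_neg h0]
      rw [hvals ⟨(α : ℕ) - 1, Nat.lt_of_le_of_lt (Nat.sub_le _ _) α.isLt⟩, if_pos h,
        if_neg (by simp only [Fin.val_mk]; have := α.isLt; omega)]
      have hidx : (⟨((↑(⟨(α : ℕ) - 1, Nat.lt_of_le_of_lt (Nat.sub_le _ _) α.isLt⟩ : Fin k) : ℕ)
          + 1) % k, Nat.mod_lt _ α.pos⟩ : Fin k) = α := by
        apply Fin.ext
        simp only [Fin.val_mk]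
        have := α.isLt
        rw [mod1 (by omega), if_neg (by omega)]
        omega
      rw [hidx]
      have hge : 1 ≤ (g α : ℕ) := by
        have := sm_lt hg (a := ⟨0, hk0⟩) (b := α) (by simp only [Fin.val_mk]; omega)
        omega
      omega
  · have hlast : ¬ (Psi g ⟨k - 1, Nat.sub_lt hk0 Nat.one_pos⟩ : ℕ) = n - 1 := by
      rw [hvals _, if_neg h]
      have hle : (g ⟨0, hk0⟩ : ℕ) ≤ (g ⟨k - 1, Nat.sub_lt hk0 Nat.one_pos⟩ : ℕ) := by
        apply sm_le hg
        simp only [Fin.val_mk]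
        omega
      have := (g ⟨k - 1, Nat.sub_lt hk0 Nat.one_pos⟩).isLt
      omega
    rw [if_neg hlast, hvals α, if_neg h]
    have hge : (g ⟨0, hk0⟩ : ℕ) ≤ (g α : ℕ) := sm_le hg (by simp only [Fin.val_mk]; omega)
    omega

lemma neg_one_pow_congr {a b : ℕ} (h : a % 2 = b % 2) : (-1 : F) ^ a = (-1 : F) ^ b := by
  rw [← Nat.div_add_mod a 2, ← Nat.div_add_mod b 2, pow_add, pow_add, pow_mul, pow_mul, h]
  norm_num

lemma eps2 (e : ℕ) : (-1 : F) ^ e * (-1 : F) ^ e = 1 := by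
  rw [← pow_add]
  exact Even.neg_one_pow ⟨e, rfl⟩

/-- key term identity for the cyclic shift. -/
lemma T_term (hk0 : 0 < k) (hn : k ≤ n) (hpar : Even (n + k))
    (X : Matrix (Fin n) (Fin k) F) {f : Fin k → Fin n} (hf : StrictMono f) :
    (-1 : F) ^ (∑ α : Fin k, ((f α : ℕ) + (α : ℕ))) * ((T X).submatrix f id).det
    = (-1 : F) ^ k *
      ((-1 : F) ^ (∑ α : Fin k, ((Phi f α : ℕ) + (α : ℕ))) *
        (X.submatrix (Phi f) id).det) := by
  obtain ⟨m, rfl⟩ : ∃ m, k = m + 1 := ⟨k - 1, by omega⟩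
  have hn0 : 0 < n := by omega
  set f' : Fin (m + 1) → Fin n :=
    fun α => ⟨((f α : ℕ) + 1) % n, Nat.mod_lt _ (f α).pos⟩ with hf'
  have hdet1 : ((T X).submatrix f id).det
      = (∏ α : Fin (m + 1), (if (f α : ℕ) = n - 1 then (-1 : F) else 1))
        * (X.submatrix f' id).det := by
    rw [show (T X).submatrix f id
        = Matrix.of (fun α β => (if ((f α : ℕ) = n - 1) then (-1 : F) else 1)
            * (X.submatrix f' id) α β) from rfl, Matrix.det_mul_column]
  have hlastmk : (⟨m + 1 - 1, Nat.sub_lt hk0 Nat.one_pos⟩ : Fin (m + 1)) = Fin.last m := by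
    apply Fin.ext; simp [Fin.last]
  by_cases h : (f ⟨m + 1 - 1, Nat.sub_lt hk0 Nat.one_pos⟩ : ℕ) = n - 1
  -- CASE B : the top row is selected
  · have hlast : (f (Fin.last m) : ℕ) = n - 1 := by rw [← hlastmk]; exact h
    have hlt : ∀ α : Fin (m + 1), (α : ℕ) < m → (f α : ℕ) < n - 1 := by
      intro α hα
      have := sm_lt hf (a := α) (b := Fin.last m) (by simpa [Fin.last] using hα)
      omega
    have hprod : (∏ α : Fin (m + 1), (if (f α : ℕ) = n - 1 then (-1 : F) else 1)) = -1 := by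
      rw [Fin.prod_univ_castSucc]
      have h1 : ∀ i : Fin m, (if (f i.castSucc : ℕ) = n - 1 then (-1 : F) else 1) = 1 := by
        intro i
        rw [if_neg (by have := hlt i.castSucc (by simp [Fin.castSucc, Fin.castAdd, Fin.castLE]); omega)]
      rw [Finset.prod_congr rfl (fun i _ => h1 i), Finset.prod_const_one, one_mul, if_pos hlast]
    have hcomp : Phi f ∘ ⇑(finRotate (m + 1)) = f' := by
      funext α
      simp only [Function.comp_apply]
      apply Fin.ext
      rw [Phi_val hk0 hf, if_pos h]
      by_cases hα : α = Fin.last m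
      · have hrot : ((finRotate (m + 1)) α : ℕ) = 0 := by
          rw [coe_finRotate, if_pos hα]
        rw [if_pos hrot]
        simp only [hf', Fin.val_mk]
        rw [hα, hlast, show n - 1 + 1 = n from by omega, Nat.mod_self]
      · have hrot : ((finRotate (m + 1)) α : ℕ) = (α : ℕ) + 1 := by
          rw [coe_finRotate, if_neg hα]
        rw [if_neg (by omega)]
        have hidx : (⟨((finRotate (m + 1)) α : ℕ) - 1,
            Nat.lt_of_le_of_lt (Nat.sub_le _ _) (Fin.isLt _)⟩ : Fin (m + 1)) = α := by
          apply Fin.ext; simp only [Fin.val_mk]; omega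
        rw [hidx]
        simp only [hf', Fin.val_mk]
        have hv : (α : ℕ) < m := by
          have h1 := α.isLt
          have h2 : (α : ℕ) ≠ m := fun hc => hα (Fin.ext hc)
          omega
        rw [Nat.mod_eq_of_lt (by have := hlt α hv; omega)]
    have hdet2 : (X.submatrix f' id).det
        = (-1 : F) ^ m * (X.submatrix (Phi f) id).det := by
      have e1 : X.submatrix f' id
          = (X.submatrix (Phi f) id).submatrix (⇑(finRotate (m + 1))) id := by
        rw [Matrix.submatrix_submatrix, hcomp]
        rfl
      rw [e1, Matrix.det_permute, sign_finRotate]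
      norm_num
    have hS1 : ∑ α : Fin (m + 1), (f' α : ℕ)
        = (∑ i : Fin m, (f i.castSucc : ℕ)) + m := by
      rw [Fin.sum_univ_castSucc]
      have e2 : ∀ i : Fin m, (f' i.castSucc : ℕ) = (f i.castSucc : ℕ) + 1 := by
        intro i
        simp only [hf', Fin.val_mk]
        have hv : (i.castSucc : ℕ) < m := by simp only [Fin.coe_castSucc]; exact i.isLt
        rw [Nat.mod_eq_of_lt (by have := hlt i.castSucc hv; omega)]
      have e3 : (f' (Fin.last m) : ℕ) = 0 := by
        simp only [hf', Fin.val_mk]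
        rw [hlast, show n - 1 + 1 = n from by omega, Nat.mod_self]
      rw [e3, Finset.sum_congr rfl (fun i _ => e2 i), Finset.sum_add_distrib]
      simp [Finset.card_univ]
    have hS2 : ∑ α : Fin (m + 1), (f α : ℕ)
        = (∑ i : Fin m, (f i.castSucc : ℕ)) + (n - 1) := by
      rw [Fin.sum_univ_castSucc, hlast]
    have hS3 : ∑ α : Fin (m + 1), (Phi f α : ℕ) = ∑ α : Fin (m + 1), (f' α : ℕ) := by
      calc ∑ α : Fin (m + 1), (Phi f α : ℕ)
          = ∑ α : Fin (m + 1), (Phi f ((finRotate (m + 1)) α) : ℕ) :=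
            (Equiv.sum_comp (finRotate (m + 1)) (fun x => (Phi f x : ℕ))).symm
        _ = ∑ α : Fin (m + 1), (f' α : ℕ) :=
            Finset.sum_congr rfl (fun α _ => by
              rw [show Phi f ((finRotate (m + 1)) α) = f' α from congrFun hcomp α])
    have hmod : (∑ α : Fin (m + 1), ((f α : ℕ) + (α : ℕ))) % 2
        = (∑ α : Fin (m + 1), ((Phi f α : ℕ) + (α : ℕ))) % 2 := by
      have e4 : (∑ α : Fin (m + 1), ((f α : ℕ) + (α : ℕ)))
          = (∑ α : Fin (m + 1), (f α : ℕ)) + ∑ α : Fin (m + 1), (α : ℕ) :=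
        Finset.sum_add_distrib
      have e5 : (∑ α : Fin (m + 1), ((Phi f α : ℕ) + (α : ℕ)))
          = (∑ α : Fin (m + 1), (Phi f α : ℕ)) + ∑ α : Fin (m + 1), (α : ℕ) :=
        Finset.sum_add_distrib
      rw [Nat.even_iff] at hpar
      omega
    rw [hdet1, hprod, hdet2, neg_one_pow_congr hmod, pow_succ]
    ring
  -- CASE A : the top row is not selected
  · have hflt : ∀ α : Fin (m + 1), (f α : ℕ) < n - 1 := by
      intro α
      have h1 := sm_le hf (a := α) (b := ⟨m + 1 - 1, Nat.sub_lt hk0 Nat.one_pos⟩)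
        (by simp only [Fin.val_mk]; have := α.isLt; omega)
      have h2 := (f ⟨m + 1 - 1, Nat.sub_lt hk0 Nat.one_pos⟩).isLt
      omega
    have hprod : (∏ α : Fin (m + 1), (if (f α : ℕ) = n - 1 then (-1 : F) else 1)) = 1 :=
      Finset.prod_eq_one (fun α _ => if_neg (by have := hflt α; omega))
    have hPhif : Phi f = f' := by
      funext α
      apply Fin.ext
      rw [Phi_val hk0 hf, if_neg h]
      simp only [hf', Fin.val_mk]
      rw [Nat.mod_eq_of_lt (by have := hflt α; omega)]
    have hs : ∀ α : Fin (m + 1), (Phi f α : ℕ) = (f α : ℕ) + 1 := by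
      intro α
      rw [hPhif]
      simp only [hf', Fin.val_mk]
      rw [Nat.mod_eq_of_lt (by have := hflt α; omega)]
    have hsum : (∑ α : Fin (m + 1), ((Phi f α : ℕ) + (α : ℕ)))
        = (∑ α : Fin (m + 1), ((f α : ℕ) + (α : ℕ))) + (m + 1) := by
      rw [show (∑ α : Fin (m + 1), ((Phi f α : ℕ) + (α : ℕ)))
          = ∑ α : Fin (m + 1), (((f α : ℕ) + (α : ℕ)) + 1) from
        Finset.sum_congr rfl (fun α _ => by rw [hs α]; ring), Finset.sum_add_distrib]
      simp [Finset.card_univ]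
    rw [hdet1, hprod, one_mul, hsum, pow_add, hPhif]
    have he := eps2 (F := F) (m + 1)
    linear_combination (-((-1 : F) ^ (∑ α : Fin (m + 1), ((f α : ℕ) + (α : ℕ)))
      * (X.submatrix f' id).det)) * he

open Classical in
lemma cullisDet_T (hk0 : 0 < k) (hn : k ≤ n) (hpar : Even (n + k))
    (X : Matrix (Fin n) (Fin k) F) :
    cullisDet (T X) = (-1 : F) ^ k * cullisDet X := by
  unfold cullisDet
  rw [Finset.mul_sum]
  refine Finset.sum_nbij' Phi Psi ?_ ?_ ?_ ?_ ?_
  · intro f hfm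
    simp only [Finset.mem_filter, Finset.mem_univ, true_and] at hfm ⊢
    exact Phi_mono hk0 hfm
  · intro g hgm
    simp only [Finset.mem_filter, Finset.mem_univ, true_and] at hgm ⊢
    exact Psi_mono hk0 hgm
  · intro f hfm
    simp only [Finset.mem_filter, Finset.mem_univ, true_and] at hfm
    exact Psi_Phi hk0 hfm
  · intro g hgm
    simp only [Finset.mem_filter, Finset.mem_univ, true_and] at hgm
    exact Phi_Psi hk0 hgm
  · intro f hfm
    simp only [Finset.mem_filter, Finset.mem_univ, true_and] at hfm
    exact T_term hk0 hn hpar X hfm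

/-- the column operation of `Smap`. -/
def colOp (j : Fin k) (X : Matrix (Fin n) (Fin k) F) : Matrix (Fin n) (Fin k) F :=
  fun r c =>
    (if (c : ℕ) = 0 ∧ (j : ℕ) ≠ 0 then (-1 : F) else 1) *
    X r (if (c : ℕ) = 0 then j else if c = j then ⟨0, j.pos⟩ else c)

open Classical in
lemma cullisDet_colOp (j : Fin k) (X : Matrix (Fin n) (Fin k) F) :
    cullisDet (colOp j X) = cullisDet X := by
  unfold cullisDet
  refine Finset.sum_congr rfl (fun f hfm => ?_)
  congr 1
  by_cases hj : (j : ℕ) = 0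
  · have hco : colOp j X = X := by
      funext r c
      unfold colOp
      by_cases hc : (c : ℕ) = 0
      · rw [if_neg (by simp [hj]), if_pos hc, one_mul,
          show j = c from Fin.ext (by rw [hj, hc])]
      · rw [if_neg (by simp [hj]), if_neg hc,
          if_neg (fun hcc : c = j => hc (by rw [hcc]; exact hj)), one_mul]
    rw [hco]
  · haveI : NeZero k := ⟨by have := j.pos; omega⟩
    have hzv : ((⟨0, j.pos⟩ : Fin k) : ℕ) = 0 := rfl
    have hswap : (colOp j X).submatrix f id
        = ((X.submatrix f id).submatrix id ⇑(Equiv.swap (0 : Fin k) j))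
          * Matrix.diagonal (fun c : Fin k => if (c : ℕ) = 0 then (-1 : F) else 1) := by
      ext α β
      rw [Matrix.mul_diagonal]
      simp only [Matrix.submatrix_apply, id_eq]
      unfold colOp
      by_cases hb : (β : ℕ) = 0
      · have hb' : β = 0 := Fin.ext hb
        rw [if_pos ⟨hb, hj⟩, if_pos hb, if_pos hb, hb', Equiv.swap_apply_left]
        ring
      · have hb' : β ≠ 0 := fun hc => hb (by rw [hc]; rfl)
        rw [if_neg (by simp [hb]), if_neg hb, if_neg hb]
        by_cases hbj : β = j
        · rw [if_pos hbj, hbj, Equiv.swap_apply_right,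
            show (⟨0, j.pos⟩ : Fin k) = 0 from Fin.ext rfl]
          ring
        · rw [if_neg hbj, Equiv.swap_apply_of_ne_of_ne hb' hbj]
          ring
    rw [hswap, Matrix.det_mul, Matrix.det_permute', Matrix.det_diagonal]
    have hsign : Equiv.Perm.sign (Equiv.swap (0 : Fin k) j) = -1 :=
      Equiv.Perm.sign_swap (fun hc => hj (by rw [← hc]; rfl))
    have hprod : (∏ c : Fin k, (if (c : ℕ) = 0 then (-1 : F) else 1)) = -1 := by
      have : ∀ c : Fin k, (if (c : ℕ) = 0 then (-1 : F) else 1)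
          = (if c = (0 : Fin k) then (-1 : F) else 1) := by
        intro c
        by_cases hc : (c : ℕ) = 0
        · rw [if_pos hc, if_pos (Fin.ext hc)]
        · rw [if_neg hc, if_neg (fun hcc => hc (by rw [hcc]; rfl))]
      rw [Finset.prod_congr rfl (fun c _ => this c), Finset.prod_ite_eq' Finset.univ]
      simp
    rw [hsign, hprod]
    push_cast
    ring

lemma cullisDet_smul (a : F) (X : Matrix (Fin n) (Fin k) F) :
    cullisDet (a • X) = a ^ k * cullisDet X := by
  unfold cullisDet
  rw [Finset.mul_sum]
  refine Finset.sum_congr rfl (fun f _ => ?_)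
  rw [show (a • X).submatrix f id = a • (X.submatrix f id) from by
    ext α β; simp [Matrix.submatrix_apply], Matrix.det_smul, Fintype.card_fin]
  ring

lemma T_iter (X : Matrix (Fin n) (Fin k) F) :
    ∀ (m : ℕ), m ≤ n → ∀ (r : Fin n) (c : Fin k),
      (T^[m] X) r c = (if n - m ≤ (r : ℕ) then (-1 : F) else 1) *
        X ⟨((r : ℕ) + m) % n, Nat.mod_lt _ r.pos⟩ c := by
  intro m
  induction m with
  | zero =>
    intro _ r c
    simp only [Function.iterate_zero, id_eq]
    rw [if_neg (by have := r.isLt; omega)]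
    have hidx : (⟨((r : ℕ) + 0) % n, Nat.mod_lt _ r.pos⟩ : Fin n) = r :=
      Fin.ext (by simp [Nat.mod_eq_of_lt r.isLt])
    rw [hidx, one_mul]
  | succ p ih =>
    intro hm r c
    rw [Function.iterate_succ_apply']
    show (if (r : ℕ) = n - 1 then (-1 : F) else 1) *
      (T^[p] X) ⟨((r : ℕ) + 1) % n, Nat.mod_lt _ r.pos⟩ c = _
    rw [ih (by omega) ⟨((r : ℕ) + 1) % n, Nat.mod_lt _ r.pos⟩ c]
    simp only [Fin.val_mk]
    have hidx : (⟨((((r : ℕ) + 1) % n) + p) % n, Nat.mod_lt _ (Fin.pos r)⟩ : Fin n)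
        = ⟨((r : ℕ) + (p + 1)) % n, Nat.mod_lt _ r.pos⟩ := by
      apply Fin.ext
      simp only [Fin.val_mk]
      rw [Nat.mod_add_mod, show (r : ℕ) + 1 + p = (r : ℕ) + (p + 1) from by omega]
    rw [hidx]
    have hr' := r.isLt
    by_cases hr : (r : ℕ) = n - 1
    · have h1 : ((r : ℕ) + 1) % n = 0 := by
        rw [show (r : ℕ) + 1 = n from by omega, Nat.mod_self]
      rw [if_pos hr, if_neg (show ¬ (n - p ≤ ((r : ℕ) + 1) % n) from by rw [h1]; omega),
        if_pos (by omega)]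
      ring
    · have h1 : ((r : ℕ) + 1) % n = (r : ℕ) + 1 := Nat.mod_eq_of_lt (by omega)
      rw [if_neg hr, one_mul]
      by_cases h2 : n - (p + 1) ≤ (r : ℕ)
      · rw [if_pos (show n - p ≤ ((r : ℕ) + 1) % n from by rw [h1]; omega), if_pos h2]
      · rw [if_neg (show ¬ (n - p ≤ ((r : ℕ) + 1) % n) from by rw [h1]; omega), if_neg h2]

lemma Smap_eq (i : Fin n) (j : Fin k) (X : Matrix (Fin n) (Fin k) F) :
    Smap i j X = ((-1 : F) ^ (n - 1 - (i : ℕ))) • colOp j (T^[(i : ℕ)] X) := by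
  funext r c
  have hs : (((-1 : F) ^ (n - 1 - (i : ℕ))) • colOp j (T^[(i : ℕ)] X)) r c
      = (-1 : F) ^ (n - 1 - (i : ℕ)) * colOp j (T^[(i : ℕ)] X) r c := rfl
  rw [hs]
  unfold colOp
  rw [T_iter X (i : ℕ) (le_of_lt i.isLt) r _]
  have hidx : (⟨((r : ℕ) + (i : ℕ)) % n, Nat.mod_lt _ r.pos⟩ : Fin n) = i + r := by
    apply Fin.ext
    rw [Fin.val_mk, Fin.val_add, Nat.add_comm (i : ℕ) (r : ℕ)]
  rw [hidx]
  have hi := i.isLt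
  have hr := r.isLt
  have hcond : (((i + r : Fin n) : ℕ) < (i : ℕ)) ↔ (n - (i : ℕ) ≤ (r : ℕ)) := by
    rw [Fin.val_add]
    by_cases hc : n - (i : ℕ) ≤ (r : ℕ)
    · rw [Nat.mod_eq_sub_mod (by omega), Nat.mod_eq_of_lt (by omega)]
      omega
    · rw [Nat.mod_eq_of_lt (by omega)]
      omega
  show (-1 : F) ^ (n - 1 - (i : ℕ)) *
      (if ((i + r : Fin n) : ℕ) < (i : ℕ) then (-1 : F) else 1) *
      (if (c : ℕ) = 0 ∧ (j : ℕ) ≠ 0 then (-1 : F) else 1) * _ = _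
  by_cases h1 : n - (i : ℕ) ≤ (r : ℕ)
  · rw [if_pos (hcond.mpr h1), if_pos h1]
    ring
  · rw [if_neg (fun hc => h1 (hcond.mp hc)), if_neg h1]
    ring

/-- the column permutation used in `Smap`. -/
def piv (j c : Fin k) : Fin k :=
  if (c : ℕ) = 0 then j else if c = j then ⟨0, j.pos⟩ else c

lemma piv_piv (j c : Fin k) : piv j (piv j c) = c := by
  unfold piv
  by_cases hc : (c : ℕ) = 0
  · rw [if_pos hc]
    by_cases hj : (j : ℕ) = 0
    · rw [if_pos hj]
      exact Fin.ext (hj.trans hc.symm)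
    · rw [if_neg hj, if_pos rfl]
      exact Fin.ext hc.symm
  · rw [if_neg hc]
    by_cases hcj : c = j
    · rw [if_pos hcj, if_pos rfl]
      exact hcj.symm
    · rw [if_neg hcj, if_neg hc, if_neg hcj]

/-- explicit inverse of `Smap`. -/
def Sinv (i : Fin n) (j : Fin k) (Y : Matrix (Fin n) (Fin k) F) :
    Matrix (Fin n) (Fin k) F :=
  fun r c =>
    (-1 : F) ^ (n - 1 - (i : ℕ)) *
    (if ((i + (r - i) : Fin n) : ℕ) < (i : ℕ) then -1 else 1) *
    (if ((piv j c : Fin k) : ℕ) = 0 ∧ (j : ℕ) ≠ 0 then -1 else 1) *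
    Y (r - i) (piv j c)

lemma Sinv_Smap (i : Fin n) (j : Fin k) (X : Matrix (Fin n) (Fin k) F) :
    Sinv i j (Smap i j X) = X := by
  haveI : NeZero n := ⟨by have := i.pos; omega⟩
  funext r c
  unfold Sinv Smap
  rw [show (if ((piv j c : Fin k) : ℕ) = 0 then j
      else if piv j c = j then ⟨0, j.pos⟩ else piv j c) = piv j (piv j c) from rfl, piv_piv]
  have hadd : i + (r - i) = r := by rw [add_comm]; exact sub_add_cancel r i
  rw [hadd]
  have he := eps2 (F := F) (n - 1 - (i : ℕ))
  split_ifs <;> linear_combination (X r c) * he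

lemma Smap_Sinv (i : Fin n) (j : Fin k) (Y : Matrix (Fin n) (Fin k) F) :
    Smap i j (Sinv i j Y) = Y := by
  haveI : NeZero n := ⟨by have := i.pos; omega⟩
  funext r c
  unfold Smap Sinv
  rw [show (if (c : ℕ) = 0 then j else if c = j then ⟨0, j.pos⟩ else c) = piv j c from rfl,
    add_sub_cancel_left i r, piv_piv]
  have he := eps2 (F := F) (n - 1 - (i : ℕ))
  split_ifs <;> linear_combination (Y r c) * he

end Cullis5

/-- for `n ≥ k ≥ 1` with `n + k` even, each `S_{i,j}` is an invertible
linear map on `M_{n,k}(F)` preserving the Cullis determinant. -/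
theorem Smap_linear_bijective_preserves {F : Type*} [Field F] (n k : ℕ)
    (hk : 1 ≤ k) (hn : k ≤ n) (hpar : Even (n + k)) (i : Fin n) (j : Fin k) :
    IsLinearMap F (Smap (F := F) i j) ∧
    Function.Bijective (Smap (F := F) i j) ∧
    ∀ X : Matrix (Fin n) (Fin k) F, cullisDet (Smap i j X) = cullisDet X := by
  refine ⟨⟨?_, ?_⟩, ?_, ?_⟩
  · intro X Y
    funext r c
    simp only [Smap, Matrix.add_apply]
    ring
  · intro a X
    funext r c
    simp only [Smap, Matrix.smul_apply, smul_eq_mul]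
    ring
  · exact Function.bijective_iff_has_inverse.mpr
      ⟨Cullis5.Sinv i j, fun X => Cullis5.Sinv_Smap i j X, fun Y => Cullis5.Smap_Sinv i j Y⟩
  · intro X
    rw [Cullis5.Smap_eq, Cullis5.cullisDet_smul, Cullis5.cullisDet_colOp]
    have hTm : ∀ (m : ℕ) (Y : Matrix (Fin n) (Fin k) F),
        cullisDet (Cullis5.T^[m] Y) = ((-1 : F) ^ k) ^ m * cullisDet Y := by
      intro m
      induction m with
      | zero => intro Y; simp
      | succ p ih =>
        intro Y
        rw [Function.iterate_succ_apply', Cullis5.cullisDet_T hk hn hpar,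
          ih Y, pow_succ]
        ring
    rw [hTm]
    rw [← mul_assoc, ← pow_mul, ← pow_mul, ← pow_add]
    have h1 : (n - 1 - (i : ℕ)) + (i : ℕ) = n - 1 := by have := i.isLt; omega
    have he : (n - 1 - (i : ℕ)) * k + k * (i : ℕ) = (n - 1) * k := by
      calc (n - 1 - (i : ℕ)) * k + k * (i : ℕ)
          = ((n - 1 - (i : ℕ)) + (i : ℕ)) * k := by ring
        _ = (n - 1) * k := by rw [h1]
    rw [he]
    have heven : Even ((n - 1) * k) := by
      rw [Nat.even_mul, Nat.even_iff, Nat.even_iff]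
      rw [Nat.even_iff] at hpar
      omega
    rw [Even.neg_one_pow heven, one_mul]
end

section
/- Let n ≥ k ≥ 1 and let B ∈ M_{n,k}(F) with rank(B) ≤ 1. Then for every A ∈ M_{n,k}(F) there exist a₀, a₁ ∈ F such that det_{n,k}(A + λB) = a₀ + a₁·λ for all λ ∈ F; that is, the function λ ↦ det_{n,k}(A + λB) is a polynomial of degree at most 1 in λ. -/
open Finset in
theorem AlternatingMap.map_add_smul_const {R M N ι : Type*} [CommSemiring R]
    [AddCommMonoid M] [Module R M] [AddCommMonoid N] [Module R N] [Fintype ι] [DecidableEq ι]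
    (f : M [⋀^ι]→ₗ[R] N) (m : ι → M) (c : ι → R) (v : M) :
    f (m + fun i => c i • v) = f m + ∑ i, c i • f (Function.update m i v) := by
  set g : Finset ι → N := fun s => f (s.piecewise (fun i => c i • v) m)
  have hg_of_one_lt_card : ∀ s : Finset ι, 1 < #s → g s = 0 := by
    intro s hs
    obtain ⟨i, hi, j, hj, hij⟩ := one_lt_card.mp hs
    have hsmul : g s = (∏ i ∈ s, c i) • f (s.piecewise (fun _ => v) m) := by
      refine (congrArg f ?_).trans (f.toMultilinearMap.map_piecewise_smul c _ s)
      funext i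
      by_cases his : i ∈ s <;> simp [his]
    rw [hsmul, f.map_eq_zero_of_eq _ (by simp [hi, hj]) hij, smul_zero]
  let singletons : ι ↪ Finset ι := ⟨singleton, singleton_injective⟩
  have hsupp : ∀ s, s ∉ insert ∅ (univ.map singletons) → g s = 0 := by
    intro s hs
    refine hg_of_one_lt_card s (not_le.mp fun hle => hs ?_)
    rcases Nat.le_one_iff_eq_zero_or_eq_one.mp hle with h | h
    · simp [card_eq_zero.mp h]
    · obtain ⟨i, rfl⟩ := card_eq_one.mp h
      simp [singletons]
  have hempty : ∅ ∉ univ.map singletons := by simp [singletons]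
  rw [add_comm m, f.map_add_univ, ← sum_subset (subset_univ _) fun s _ hs => hsupp s hs,
    sum_insert hempty, sum_map]
  simp [g, singletons, piecewise_singleton, f.map_update_smul]

namespace Matrix

theorem det_add_smul_vecMulVec {R n : Type*} [CommRing R] [Fintype n] [DecidableEq n]
    (M : Matrix n n R) (u v : n → R) (lam : R) :
    (M + lam • vecMulVec u v).det = M.det + lam * ∑ i, u i * (M.updateRow i v).det := by
  have hrows : M + lam • vecMulVec u v = of (of.symm M + fun i => (lam * u i) • v) := by
    ext i j
    simp [vecMulVec_apply, mul_assoc]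
  rw [hrows]
  change detRowAlternating (of.symm M + fun i => (lam * u i) • v) = _
  rw [AlternatingMap.map_add_smul_const]
  simp only [smul_eq_mul, Finset.mul_sum, mul_assoc]
  rfl

theorem exists_eq_vecMulVec_of_rank_le_one {m n K : Type*} [Field K] [Fintype n]
    (B : Matrix m n K) (hB : B.rank ≤ 1) : ∃ u v, B = vecMulVec u v := by
  obtain ⟨u, hu⟩ := finrank_le_one_iff.mp hB
  have hcol : ∀ j, ∃ c : K, c • (u : m → K) = B.col j := fun j => by
    classical
    obtain ⟨c, hc⟩ := hu ⟨B *ᵥ Pi.single j 1, Pi.single j 1, rfl⟩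
    exact ⟨c, by simpa [mulVec_single] using congrArg Subtype.val hc⟩
  choose v hv using hcol
  refine ⟨u, v, ext fun i j => ?_⟩
  rw [vecMulVec_apply, ← col_apply B j i, ← hv j, Pi.smul_apply, smul_eq_mul, mul_comm]

end Matrix

theorem cullisDet_add_smul_vecMulVec {F : Type*} [Field F] {n k : ℕ}
    (A : Matrix (Fin n) (Fin k) F) (u : Fin n → F) (v : Fin k → F) :
    ∃ b : F, ∀ lam : F, cullisDet (A + lam • Matrix.vecMulVec u v) = cullisDet A + lam * b := by
  classical
  refine ⟨∑ f ∈ Finset.univ.filter (fun f : Fin k → Fin n => StrictMono f),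
      (-1 : F) ^ (∑ α : Fin k, ((f α : ℕ) + (α : ℕ))) *
        ∑ α, u (f α) * ((A.submatrix f id).updateRow α v).det, fun lam => ?_⟩
  have hminor (f : Fin k → Fin n) : (A + lam • Matrix.vecMulVec u v).submatrix f id =
      A.submatrix f id + lam • Matrix.vecMulVec (u ∘ f) v := rfl
  simp only [cullisDet, hminor, Matrix.det_add_smul_vecMulVec, mul_add, Finset.sum_add_distrib,
    Finset.mul_sum, Function.comp_apply]
  congr 1
  exact Finset.sum_congr rfl fun f _ => Finset.sum_congr rfl fun α _ => by ring

theorem cullis_rank_one_deg_le_one_general {F : Type*} [Field F] (n k : ℕ)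
    (B : Matrix (Fin n) (Fin k) F) (hB : B.rank ≤ 1) :
    ∀ A : Matrix (Fin n) (Fin k) F, ∃ a₀ a₁ : F, ∀ lam : F,
      cullisDet (A + lam • B) = a₀ + a₁ * lam := by
  obtain ⟨u, v, rfl⟩ := B.exists_eq_vecMulVec_of_rank_le_one hB
  intro A
  obtain ⟨b, hb⟩ := cullisDet_add_smul_vecMulVec A u v
  exact ⟨cullisDet A, b, fun lam => by rw [hb, mul_comm]⟩

/-- if `rank B ≤ 1`, then for every `A` the function
`λ ↦ cullisDet (A + λ • B)` is a polynomial of degree at most `1`. -/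
theorem cullis_rank_one_deg_le_one {F : Type*} [Field F] (n k : ℕ)
    (hk : 1 ≤ k) (hn : k ≤ n) (B : Matrix (Fin n) (Fin k) F) (hB : B.rank ≤ 1) :
    ∀ A : Matrix (Fin n) (Fin k) F, ∃ a₀ a₁ : F, ∀ lam : F,
      cullisDet (A + lam • B) = a₀ + a₁ * lam :=
  cullis_rank_one_deg_le_one_general n k B hB
end

section
/- Let n ≥ 5 and let B ∈ M_{n,3}(F) be the matrix whose first column is e₁ − e₅, whose second column is e₂ − e₄, and whose third column is zero. Then rank(B) = 2, and nevertheless for every A ∈ M_{n,3}(F) there exist a₀, a₁ ∈ F such that det_{n,3}(A + λB) = a₀ + a₁λ for all λ ∈ F. -/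
/-- The counterexample matrix of STATEMENT 15: first column `e₁ − e₅`, second column
`e₂ − e₄`, third column zero (indices `1`-indexed, so `0`-indexed rows `0,4` and `1,3`). -/
def counterB (F : Type*) [Field F] (n : ℕ) : Matrix (Fin n) (Fin 3) F :=
  fun i j =>
    if (j : ℕ) = 0 then (if (i : ℕ) = 0 then 1 else if (i : ℕ) = 4 then -1 else 0)
    else if (j : ℕ) = 1 then (if (i : ℕ) = 1 then 1 else if (i : ℕ) = 3 then -1 else 0)
    else 0

/-!
Expanding every maximal minor by the Leibniz formula and regrouping, the Cullis determinant becomes a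
sum over all maps `g : Fin k → Fin n` of `ε(g) ∏ α, (-1) ^ (g α + α) X (g α) α`, where
`ε(g) = ∏_{α < β} sgn (g β - g α)` is the sign of the permutation sorting `g` (and `0` when `g` is
not injective). As the third column of `B` vanishes, `det_{n,3}(A + λB)` is quadratic in `λ`, with
`λ²`-coefficient the Cullis determinant of `B` with its third column replaced by the third column `z`
of `A`. The signs `(-1) ^ (i + α)` are trivial on the support of `B`, so that coefficient is
`∑_c (ε(0,1,c) - ε(0,3,c) - ε(4,1,c) + ε(4,3,c)) z_c`, and the bracket factors as
`(sgn c + sgn (c - 4)) (sgn (c - 1) - sgn (c - 3))`, whose first factor vanishes for `1 ≤ c ≤ 3`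
and whose second factor vanishes otherwise.
-/

open Finset

section Leibniz

variable {k n : ℕ}

def sortSign (g : Fin k → Fin n) : ℤ :=
  ∏ i, ∏ j ∈ Ioi i, Int.sign ((g j : ℤ) - g i)

lemma sortSign_strictMono_comp {f : Fin k → Fin n} (hf : StrictMono f) (σ : Equiv.Perm (Fin k)) :
    sortSign (f ∘ σ) = σ.sign := by
  rw [σ.sign_eq_prod_prod_Ioi, sortSign]
  push_cast
  refine prod_congr rfl fun i _ => prod_congr rfl fun j hj => ?_
  have hij : σ i ≠ σ j := σ.injective.ne (mem_Ioi.1 hj).ne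
  rcases hij.lt_or_gt with h | h
  · have : ((f (σ i) : ℕ) : ℤ) < f (σ j) := by exact_mod_cast hf h
    simp [h, Int.sign_eq_one_of_pos (sub_pos.2 this)]
  · have : ((f (σ j) : ℕ) : ℤ) < f (σ i) := by exact_mod_cast hf h
    simp [h.not_gt, Int.sign_eq_neg_one_of_neg (sub_neg.2 this)]

lemma sortSign_eq_zero_of_not_injective {g : Fin k → Fin n} (hg : ¬ Function.Injective g) :
    sortSign g = 0 := by
  obtain ⟨i, j, hij, hne⟩ : ∃ i j, g i = g j ∧ i < j := by
    obtain ⟨i, j, hij, hne⟩ := Function.not_injective_iff.1 hg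
    rcases hne.lt_or_gt with h | h
    · exact ⟨i, j, hij, h⟩
    · exact ⟨j, i, hij.symm, h⟩
  refine prod_eq_zero (mem_univ i) (prod_eq_zero (mem_Ioi.2 hne) ?_)
  simp [hij]

open Classical in
/-- Every injective `g` factors uniquely as `f ∘ σ` with `f` strictly monotone, namely
`f = g ∘ Tuple.sort g`. -/
lemma sum_strictMono_sum_perm_comp_eq_sum {M : Type*} [AddCommMonoid M]
    (G : (Fin k → Fin n) → M) (hG : ∀ g, ¬ Function.Injective g → G g = 0) :
    ∑ f ∈ univ.filter (fun f : Fin k → Fin n => StrictMono f), ∑ σ : Equiv.Perm (Fin k), G (f ∘ σ)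
      = ∑ g, G g := by
  rw [← sum_product', ← sum_filter_of_ne (p := Function.Injective)
    fun g _ h => by_contra fun hi => h (hG g hi)]
  refine sum_nbij' (fun p => p.1 ∘ p.2) (fun g => (g ∘ Tuple.sort g, (Tuple.sort g)⁻¹))
    ?_ ?_ ?_ ?_ fun _ _ => rfl
  · simp only [mem_product, mem_filter, mem_univ, true_and, and_true]
    exact fun p hp => hp.injective.comp p.2.injective
  · simp only [mem_product, mem_filter, mem_univ, true_and, and_true]
    exact fun g hg =>
      (Tuple.monotone_sort g).strictMono_of_injective (hg.comp (Tuple.sort g).injective)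
  · rintro ⟨f, σ⟩ hp
    simp only [mem_product, mem_filter, mem_univ, true_and, and_true] at hp
    have hsort : σ⁻¹ = Tuple.sort (f ∘ σ) := by
      rw [Tuple.eq_sort_iff]
      refine ⟨by simpa [Function.comp_def] using hp.monotone, fun i j hij heq => ?_⟩
      simp only [Function.comp_apply, Equiv.Perm.coe_inv, Equiv.apply_symm_apply] at heq
      exact absurd (hp.injective heq) hij.ne
    simp [← hsort, Function.comp_assoc]
  · intro g _
    simp [Function.comp_assoc]

theorem cullisDet_eq_sum_sortSign {F : Type*} [Field F] (X : Matrix (Fin n) (Fin k) F) :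
    cullisDet X = ∑ g : Fin k → Fin n,
      (sortSign g : F) * ∏ α, ((-1) ^ ((g α : ℕ) + α) * X (g α) α) := by
  classical
  rw [← sum_strictMono_sum_perm_comp_eq_sum]
  · refine sum_congr rfl fun f hf => ?_
    have hf : StrictMono f := (mem_filter.1 hf).2
    rw [Matrix.det_apply, mul_sum]
    refine sum_congr rfl fun σ _ => ?_
    have hexp : ∑ α, (((f ∘ σ) α : ℕ) + α) = ∑ α, ((f α : ℕ) + α) := by
      rw [sum_add_distrib, sum_add_distrib]
      exact congrArg (· + _) (Equiv.sum_comp σ (fun α => (f α : ℕ)))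
    rw [sortSign_strictMono_comp hf, prod_mul_distrib, prod_pow_eq_pow_sum, hexp]
    simp only [Matrix.submatrix_apply, id_eq, Function.comp_apply, Units.smul_def]
    ring
  · intro g hg
    simp [sortSign_eq_zero_of_not_injective hg]

end Leibniz

lemma sum_fun_fin_three {α M : Type*} [Fintype α] [AddCommMonoid M] (H : (Fin 3 → α) → M) :
    ∑ g, H g = ∑ a, ∑ b, ∑ c, H ![a, b, c] := by
  simp only [← (Fin.consEquiv fun _ => α).sum_comp, Fintype.sum_prod_type, Fintype.sum_unique]
  rfl

lemma sortSign_fin_three {n : ℕ} (g : Fin 3 → Fin n) :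
    sortSign g = Int.sign ((g 1 : ℤ) - g 0) * Int.sign ((g 2 : ℤ) - g 0)
      * Int.sign ((g 2 : ℤ) - g 1) := by
  have h1 : Ioi (1 : Fin 3) = {2} := by decide
  have h2 : Ioi (2 : Fin 3) = ∅ := by decide
  simp [sortSign, Fin.prod_univ_three, h1, h2]

theorem cullisDet_add_smul_of_col_two_eq_zero {F : Type*} [Field F] {n : ℕ}
    (X Y : Matrix (Fin n) (Fin 3) F) (hY : ∀ i, Y i 2 = 0) (lam : F) :
    cullisDet (X + lam • Y) = cullisDet X
      + lam * (cullisDet (X + Y) - cullisDet X - cullisDet (Y.updateCol 2 (X · 2)))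
      + lam ^ 2 * cullisDet (Y.updateCol 2 (X · 2)) := by
  simp only [cullisDet_eq_sum_sortSign, mul_sum, ← sum_sub_distrib, ← sum_add_distrib]
  refine sum_congr rfl fun g _ => ?_
  simp only [Fin.prod_univ_three, Matrix.add_apply, Matrix.smul_apply, smul_eq_mul,
    Matrix.updateCol_apply, hY, Fin.reduceEq, ite_false, ite_true]
  ring

lemma sign_add_sign_sub_four_mul_sign_sub_one_sub_sign_sub_three (c : ℤ) :
    (Int.sign c + Int.sign (c - 4)) * (Int.sign (c - 1) - Int.sign (c - 3)) = 0 := by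
  rcases le_or_gt c 0 with h | h
  · rw [Int.sign_eq_neg_one_of_neg (by omega : c - 1 < 0),
      Int.sign_eq_neg_one_of_neg (by omega : c - 3 < 0)]
    ring
  rcases le_or_gt 4 c with h' | h'
  · rw [Int.sign_eq_one_of_pos (by omega : 0 < c - 1), Int.sign_eq_one_of_pos (by omega : 0 < c - 3)]
    ring
  · rw [Int.sign_eq_one_of_pos h, Int.sign_eq_neg_one_of_neg (by omega : c - 4 < 0)]
    ring

section CounterB

variable {F : Type*} [Field F] {n : ℕ}

lemma counterB_col_two (i : Fin n) : counterB F n i 2 = 0 := by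
  simp [counterB]

lemma counterB_rank (hn : 5 ≤ n) : (counterB F n).rank = 2 := by
  set u : Fin n → F := fun i => counterB F n i 0
  set w : Fin n → F := fun i => counterB F n i 1
  have hcol : (counterB F n).col = ![u, w, 0] := by
    ext j i
    fin_cases j
    · rfl
    · rfl
    · exact counterB_col_two i
  have hind : LinearIndependent F ![u, w] := by
    refine LinearIndependent.pair_iff.2 fun s t hst => ?_
    exact ⟨by simpa [u, w, counterB] using congrFun hst ⟨0, by omega⟩,
      by simpa [u, w, counterB] using congrFun hst ⟨1, by omega⟩⟩
  have hspan : Submodule.span F (Set.range ![u, w, 0]) = Submodule.span F (Set.range ![u, w]) := by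
    simp [Matrix.range_cons]
  rw [Matrix.rank_eq_finrank_span_cols, hcol, hspan, finrank_span_eq_card hind, Fintype.card_fin]

lemma sortSign_alternating_sum_counterB_support (hn : 5 ≤ n) (c : Fin n) :
    sortSign ![⟨0, by omega⟩, ⟨1, by omega⟩, c] - sortSign ![⟨0, by omega⟩, ⟨3, by omega⟩, c]
      - (sortSign ![⟨4, by omega⟩, ⟨1, by omega⟩, c] - sortSign ![⟨4, by omega⟩, ⟨3, by omega⟩, c])
      = 0 := by
  simp only [sortSign_fin_three, Matrix.cons_val_zero, Matrix.cons_val_one, Matrix.cons_val_two,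
    Matrix.tail_cons, Matrix.head_cons]
  norm_num [show Int.sign 3 = 1 from rfl]
  linear_combination sign_add_sign_sub_four_mul_sign_sub_one_sub_sign_sub_three (c : ℤ)

/-- The nonzero entries of column `α` sit in rows of the parity of `α`. -/
lemma counterB_neg_one_pow_mul (i : Fin n) (α : Fin 3) :
    (-1 : F) ^ ((i : ℕ) + α) * counterB F n i α = counterB F n i α := by
  fin_cases α <;> simp only [counterB] <;> split_ifs <;> simp_all [pow_succ]

lemma sum_counterB_col_zero_mul (hn : 5 ≤ n) (h : Fin n → F) :
    ∑ i, counterB F n i 0 * h i = h ⟨0, by omega⟩ - h ⟨4, by omega⟩ := by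
  rw [Fintype.sum_eq_add ⟨0, by omega⟩ ⟨4, by omega⟩ (by simp [Fin.ext_iff])]
  · simp [counterB, sub_eq_add_neg]
  · rintro i ⟨h0, h4⟩
    simp_all [counterB, Fin.ext_iff]

lemma sum_counterB_col_one_mul (hn : 5 ≤ n) (h : Fin n → F) :
    ∑ i, counterB F n i 1 * h i = h ⟨1, by omega⟩ - h ⟨3, by omega⟩ := by
  rw [Fintype.sum_eq_add ⟨1, by omega⟩ ⟨3, by omega⟩ (by simp [Fin.ext_iff])]
  · simp [counterB, sub_eq_add_neg]
  · rintro i ⟨h1, h3⟩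
    simp_all [counterB, Fin.ext_iff]

lemma sum_sortSign_mul_counterB (hn : 5 ≤ n) (z : Fin n → F) :
    ∑ g : Fin 3 → Fin n,
      (sortSign g : F) * (counterB F n (g 0) 0 * counterB F n (g 1) 1 * z (g 2)) = 0 := by
  rw [sum_fun_fin_three]
  have hrearr : ∀ a b c : Fin n,
      (sortSign ![a, b, c] : F) * (counterB F n a 0 * counterB F n b 1 * z c)
        = counterB F n a 0 * (counterB F n b 1 * ((sortSign ![a, b, c] : F) * z c)) :=
    fun _ _ _ => by ring
  simp only [Matrix.cons_val_zero, Matrix.cons_val_one, Matrix.cons_val_two, Matrix.tail_cons,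
    Matrix.head_cons, hrearr]
  simp only [← mul_sum]
  rw [sum_counterB_col_zero_mul hn, sum_counterB_col_one_mul hn, sum_counterB_col_one_mul hn,
    ← sum_sub_distrib, ← sum_sub_distrib, ← sum_sub_distrib]
  refine sum_eq_zero fun c _ => ?_
  have key := congrArg (Int.cast : ℤ → F) (sortSign_alternating_sum_counterB_support hn c)
  push_cast at key
  linear_combination z c * key

theorem cullisDet_counterB_updateCol_two (hn : 5 ≤ n) (v : Fin n → F) :
    cullisDet ((counterB F n).updateCol 2 v) = 0 := by
  rw [cullisDet_eq_sum_sortSign]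
  simp only [Fin.prod_univ_three, Matrix.updateCol_apply, Fin.reduceEq, ite_false, ite_true,
    counterB_neg_one_pow_mul]
  exact sum_sortSign_mul_counterB hn fun i => (-1) ^ ((i : ℕ) + ((2 : Fin 3) : ℕ)) * v i

end CounterB

/-- for `n ≥ 5` the matrix `counterB` has rank `2`, yet
`λ ↦ cullisDet (A + λ • counterB)` has degree at most `1` for every `A`. -/
theorem counterB_rank_two_deg_le_one {F : Type*} [Field F] (n : ℕ) (hn : 5 ≤ n) :
    (counterB F n).rank = 2 ∧
    ∀ A : Matrix (Fin n) (Fin 3) F, ∃ a₀ a₁ : F, ∀ lam : F,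
      cullisDet (A + lam • counterB F n) = a₀ + a₁ * lam := by
  refine ⟨counterB_rank hn, fun A => ⟨cullisDet A, cullisDet (A + counterB F n) - cullisDet A,
    fun lam => ?_⟩⟩
  rw [cullisDet_add_smul_of_col_two_eq_zero A _ counterB_col_two,
    cullisDet_counterB_updateCol_two hn]
  ring
end

section
/- Assume n ≥ 2 and n is even. Let X = (x_{ij}) ∈ M_{n,2}(F), and set S₁ = Σ_{i=2}^{n−1} (−1)^i x_{i,1} and S₂ = Σ_{i=2}^{n−1} (−1)^i x_{i,2}. Let Y ∈ M_{n,2}(F) be the matrix that agrees with X in all entries except Y_{1,1} = S₁ + S₂ + x_{n,2} and Y_{n,2} = −S₁ − S₂ + x_{1,1} (so the rows of Y are (S₁+S₂+x_{n,2}, x_{1,2}), (x_{2,1}, x_{2,2}), …, (x_{n−1,1}, x_{n−1,2}), (x_{n,1}, −S₁−S₂+x_{1,1})). Then det_{n,2}(X) = det_{n,2}(Y). -/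
private lemma strictMono_fin_two' {n : ℕ} {f : Fin 2 → Fin n} :
    StrictMono f ↔ f 0 < f 1 := by
  constructor
  · intro h; exact h (by decide)
  · intro h a b hab
    fin_cases a <;> fin_cases b <;> first | exact h | exact absurd hab (by decide)

private lemma cullisDet_two {F : Type*} [Field F] {n : ℕ} (X : Matrix (Fin n) (Fin 2) F) :
    cullisDet X = ∑ i : Fin n, ∑ j : Fin n,
      if (i : ℕ) < (j : ℕ) then
        (-1 : F) ^ ((i : ℕ) + (j : ℕ) + 1) * (X i 0 * X j 1 - X j 0 * X i 1)
      else 0 := by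
  rw [cullisDet, Finset.sum_filter, ← Finset.sum_product']
  refine Finset.sum_nbij' (fun f => (f 0, f 1)) (fun p => ![p.1, p.2]) ?_ ?_ ?_ ?_ ?_
  · intro f _; exact Finset.mem_univ _
  · intro p _; exact Finset.mem_univ _
  · intro f _; funext x; fin_cases x <;> simp
  · intro p _; simp
  · intro f _
    simp only
    by_cases h : StrictMono f
    · have h' : (f 0 : ℕ) < (f 1 : ℕ) := Fin.lt_iff_val_lt_val.mp (strictMono_fin_two'.mp h)
      rw [if_pos h, if_pos h', Fin.sum_univ_two, Matrix.det_fin_two]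
      simp only [Matrix.submatrix_apply, id_eq, Fin.val_zero, Fin.val_one]
      have e : ((f 0 : ℕ) + 0) + ((f 1 : ℕ) + 1) = (f 0 : ℕ) + (f 1 : ℕ) + 1 := by omega
      rw [e]; ring
    · rw [if_neg h, if_neg (fun hh => h (strictMono_fin_two'.mpr (Fin.lt_iff_val_lt_val.mpr hh)))]

set_option maxHeartbeats 1600000 in
/-- for even `n ≥ 2`, modifying the `(1,1)` entry of `X ∈ M_{n,2}(F)` to
`S₁ + S₂ + x_{n,2}` and the `(n,2)` entry to `−S₁ − S₂ + x_{1,1}` (with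
`Sⱼ = Σ_{i=2}^{n−1} (−1)^i x_{i,j}`, indices `1`-indexed) does not change the Cullis
determinant. -/
theorem cullis_det_n2_modified {F : Type*} [Field F] (n : ℕ) (hn : 2 ≤ n)
    (hpar : Even n) (X : Matrix (Fin n) (Fin 2) F) (S₁ S₂ : F)
    (hS₁ : S₁ = ∑ r ∈ Finset.univ.filter (fun r : Fin n => 1 ≤ (r : ℕ) ∧ (r : ℕ) ≤ n - 2),
      (-1 : F) ^ ((r : ℕ) + 1) * X r 0)
    (hS₂ : S₂ = ∑ r ∈ Finset.univ.filter (fun r : Fin n => 1 ≤ (r : ℕ) ∧ (r : ℕ) ≤ n - 2),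
      (-1 : F) ^ ((r : ℕ) + 1) * X r 1)
    (Y : Matrix (Fin n) (Fin 2) F)
    (hY : Y = fun (i : Fin n) (j : Fin 2) =>
      if (i : ℕ) = 0 ∧ (j : ℕ) = 0 then S₁ + S₂ + X ⟨n - 1, by omega⟩ 1
      else if (i : ℕ) = n - 1 ∧ (j : ℕ) = 1 then -S₁ - S₂ + X ⟨0, by omega⟩ 0
      else X i j) :
    cullisDet X = cullisDet Y := by
  have h0 : (0 : ℕ) < n := by omega
  have h1 : n - 1 < n := by omega
  have hY0 : ∀ i : Fin n, Y i 0 =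
      if (i : ℕ) = 0 then S₁ + S₂ + X ⟨n - 1, h1⟩ 1 else X i 0 := by
    intro i; rw [hY]; simp
  have hY1 : ∀ i : Fin n, Y i 1 =
      if (i : ℕ) = n - 1 then -S₁ - S₂ + X ⟨0, h0⟩ 0 else X i 1 := by
    intro i; rw [hY]; simp
  have hv0 : ((⟨0, h0⟩ : Fin n) : ℕ) = 0 := rfl
  have hv1 : ((⟨n - 1, h1⟩ : Fin n) : ℕ) = n - 1 := rfl
  have key : ∀ i j : Fin n,
      ((if (i : ℕ) < (j : ℕ) then
          (-1 : F) ^ ((i : ℕ) + (j : ℕ) + 1) * (X i 0 * X j 1 - X j 0 * X i 1) else 0)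
        - (if (i : ℕ) < (j : ℕ) then
          (-1 : F) ^ ((i : ℕ) + (j : ℕ) + 1) * (Y i 0 * Y j 1 - Y j 0 * Y i 1) else 0))
      = (if (i : ℕ) = 0 then (1 : F) else 0) *
          (if 1 ≤ (j : ℕ) ∧ (j : ℕ) ≤ n - 2 then
            (X ⟨0, h0⟩ 0 - (S₁ + S₂) - X ⟨n - 1, h1⟩ 1) * ((-1 : F) ^ ((j : ℕ) + 1) * X j 1)
          else 0)
        + (if 1 ≤ (i : ℕ) ∧ (i : ℕ) ≤ n - 2 then
            (X ⟨0, h0⟩ 0 - (S₁ + S₂) - X ⟨n - 1, h1⟩ 1) * ((-1 : F) ^ ((i : ℕ) + 1) * X i 0)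
          else 0) * (if (j : ℕ) = n - 1 then (1 : F) else 0)
        + (if (i : ℕ) = 0 then (1 : F) else 0) *
          (if (j : ℕ) = n - 1 then (X ⟨0, h0⟩ 0 * X ⟨n - 1, h1⟩ 1 - ((S₁ + S₂) + X ⟨n - 1, h1⟩ 1) * (X ⟨0, h0⟩ 0 - (S₁ + S₂))) else 0) := by
    intro i j
    have hjLt := j.isLt
    have hiLt := i.isLt
    by_cases hi : (i : ℕ) = 0 <;> by_cases hj : (j : ℕ) = n - 1
    · have hi' : i = (⟨0, h0⟩ : Fin n) := Fin.ext hi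
      have hj' : j = (⟨n - 1, h1⟩ : Fin n) := Fin.ext hj
      have hpow : (-1 : F) ^ ((i : ℕ) + (j : ℕ) + 1) = 1 := by
        have e : (i : ℕ) + (j : ℕ) + 1 = n := by omega
        rw [e]; exact hpar.neg_one_pow
      rw [hY0 i, hY1 j, hY0 j, hY1 i, hpow, hi', hj']
      simp only [hv0, hv1]
      split_ifs <;> first | ring1 | (exfalso; omega)
    · by_cases hj0 : (j : ℕ) = 0
      · rw [hY0 i, hY1 j, hY0 j, hY1 i]
        split_ifs <;> first | ring1 | (exfalso; omega)
      · have hi' : i = (⟨0, h0⟩ : Fin n) := Fin.ext hi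
        have hpow : (-1 : F) ^ ((i : ℕ) + (j : ℕ) + 1) = (-1 : F) ^ ((j : ℕ) + 1) := by
          have e : (i : ℕ) + (j : ℕ) + 1 = (j : ℕ) + 1 := by omega
          rw [e]
        rw [hY0 i, hY1 j, hY0 j, hY1 i, hpow, hi']
        simp only [hv0, hv1]
        split_ifs <;> first | ring1 | (exfalso; omega)
    · by_cases hiLt2 : (i : ℕ) < n - 1
      · have hj' : j = (⟨n - 1, h1⟩ : Fin n) := Fin.ext hj
        have hodd : (-1 : F) ^ (n - 1) = -1 :=
          Odd.neg_one_pow (Nat.Even.sub_odd (by omega) hpar odd_one)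
        have hpow : (-1 : F) ^ ((i : ℕ) + (j : ℕ) + 1) = (-1 : F) ^ ((i : ℕ) + 1) * -1 := by
          have e : (i : ℕ) + (j : ℕ) + 1 = ((i : ℕ) + 1) + (n - 1) := by omega
          rw [e, pow_add, hodd]
        rw [hY0 i, hY1 j, hY0 j, hY1 i, hpow, hj']
        simp only [hv0, hv1]
        split_ifs <;> first | ring1 | (exfalso; omega)
      · rw [hY0 i, hY1 j, hY0 j, hY1 i]
        split_ifs <;> first | ring1 | (exfalso; omega)
    · rw [hY0 i, hY1 j, hY0 j, hY1 i]
      split_ifs <;> first | ring1 | (exfalso; omega)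
  rw [cullisDet_two X, cullisDet_two Y, ← sub_eq_zero]
  simp only [← Finset.sum_sub_distrib]
  simp only [key]
  simp only [Finset.sum_add_distrib]
  have p1 : (∑ i : Fin n, ∑ j : Fin n, (if (i : ℕ) = 0 then (1 : F) else 0) *
        (if 1 ≤ (j : ℕ) ∧ (j : ℕ) ≤ n - 2 then (X ⟨0, h0⟩ 0 - (S₁ + S₂) - X ⟨n - 1, h1⟩ 1) * ((-1 : F) ^ ((j : ℕ) + 1) * X j 1) else 0))
      = (∑ i : Fin n, if (i : ℕ) = 0 then (1 : F) else 0) *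
        (∑ j : Fin n, if 1 ≤ (j : ℕ) ∧ (j : ℕ) ≤ n - 2 then
          (X ⟨0, h0⟩ 0 - (S₁ + S₂) - X ⟨n - 1, h1⟩ 1) * ((-1 : F) ^ ((j : ℕ) + 1) * X j 1) else 0) :=
    (Finset.sum_mul_sum _ _ _ _).symm
  have p2 : (∑ i : Fin n, ∑ j : Fin n, (if 1 ≤ (i : ℕ) ∧ (i : ℕ) ≤ n - 2 then
        (X ⟨0, h0⟩ 0 - (S₁ + S₂) - X ⟨n - 1, h1⟩ 1) * ((-1 : F) ^ ((i : ℕ) + 1) * X i 0) else 0) *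
        (if (j : ℕ) = n - 1 then (1 : F) else 0))
      = (∑ i : Fin n, if 1 ≤ (i : ℕ) ∧ (i : ℕ) ≤ n - 2 then
          (X ⟨0, h0⟩ 0 - (S₁ + S₂) - X ⟨n - 1, h1⟩ 1) * ((-1 : F) ^ ((i : ℕ) + 1) * X i 0) else 0) *
        (∑ j : Fin n, if (j : ℕ) = n - 1 then (1 : F) else 0) :=
    (Finset.sum_mul_sum _ _ _ _).symm
  have p3 : (∑ i : Fin n, ∑ j : Fin n, (if (i : ℕ) = 0 then (1 : F) else 0) *
        (if (j : ℕ) = n - 1 then (X ⟨0, h0⟩ 0 * X ⟨n - 1, h1⟩ 1 - ((S₁ + S₂) + X ⟨n - 1, h1⟩ 1) * (X ⟨0, h0⟩ 0 - (S₁ + S₂))) else 0))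
      = (∑ i : Fin n, if (i : ℕ) = 0 then (1 : F) else 0) *
        (∑ j : Fin n, if (j : ℕ) = n - 1 then (X ⟨0, h0⟩ 0 * X ⟨n - 1, h1⟩ 1 - ((S₁ + S₂) + X ⟨n - 1, h1⟩ 1) * (X ⟨0, h0⟩ 0 - (S₁ + S₂))) else 0) :=
    (Finset.sum_mul_sum _ _ _ _).symm
  rw [p1, p2, p3]
  have hiff0 : ∀ i : Fin n, ((i : ℕ) = 0 ↔ i = (⟨0, h0⟩ : Fin n)) := fun i =>
    ⟨fun h => Fin.ext (h.trans hv0.symm), fun h => by rw [h]⟩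
  have hiff1 : ∀ j : Fin n, ((j : ℕ) = n - 1 ↔ j = (⟨n - 1, h1⟩ : Fin n)) := fun j =>
    ⟨fun h => Fin.ext (h.trans hv1.symm), fun h => by rw [h]⟩
  have fA : (∑ i : Fin n, if (i : ℕ) = 0 then (1 : F) else 0) = 1 := by
    simp only [hiff0]; simp
  have fD : (∑ j : Fin n, if (j : ℕ) = n - 1 then (1 : F) else 0) = 1 := by
    simp only [hiff1]; simp
  have fB : (∑ j : Fin n, if 1 ≤ (j : ℕ) ∧ (j : ℕ) ≤ n - 2 then
      (X ⟨0, h0⟩ 0 - (S₁ + S₂) - X ⟨n - 1, h1⟩ 1) * ((-1 : F) ^ ((j : ℕ) + 1) * X j 1) else 0) = (X ⟨0, h0⟩ 0 - (S₁ + S₂) - X ⟨n - 1, h1⟩ 1) * S₂ := by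
    rw [hS₂, ← Finset.sum_filter, Finset.mul_sum]
  have fC : (∑ i : Fin n, if 1 ≤ (i : ℕ) ∧ (i : ℕ) ≤ n - 2 then
      (X ⟨0, h0⟩ 0 - (S₁ + S₂) - X ⟨n - 1, h1⟩ 1) * ((-1 : F) ^ ((i : ℕ) + 1) * X i 0) else 0) = (X ⟨0, h0⟩ 0 - (S₁ + S₂) - X ⟨n - 1, h1⟩ 1) * S₁ := by
    rw [hS₁, ← Finset.sum_filter, Finset.mul_sum]
  have fE : (∑ j : Fin n, if (j : ℕ) = n - 1 then (X ⟨0, h0⟩ 0 * X ⟨n - 1, h1⟩ 1 - ((S₁ + S₂) + X ⟨n - 1, h1⟩ 1) * (X ⟨0, h0⟩ 0 - (S₁ + S₂))) else 0) = (X ⟨0, h0⟩ 0 * X ⟨n - 1, h1⟩ 1 - ((S₁ + S₂) + X ⟨n - 1, h1⟩ 1) * (X ⟨0, h0⟩ 0 - (S₁ + S₂))) := by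
    simp only [hiff1]; simp
  rw [fA, fB, fC, fD, fE]
  ring
end
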